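/- arXiv:2012.13183 — 4 statements merged into one kernel-verified Lean document; each statement's English description precedes it below -/
import Mathlib

section
/- Let f : Σ_j I_j → I be a piecewise C^1 expanding map with finitely many branches I_1, …, I_m, where each I_j is a nonempty open subinterval of the compact interval I, |f'| ≥ σ > 2 on each I_j, and I ∖ (∪_j I_j) is finite. Then: (a) for each sufficiently small δ > 0 there exists n = n(δ) such that for every nonempty open interval J ⊂ ∪_j I_j with |J| ≥ δ, there exist 0 ≤ k ≤ n, a subinterval Ĵ of J and 1 ≤ j ≤ m such that f^k restricted to Ĵ is a diffeomorphism onto I_j; (b) f admits finitely many periodic orbits 𝒪(p_1), …, 𝒪(p_k) contained in ∪_j I_j with the property that every nonempty open interval J ⊂ ∪_j I_j admits an open subinterval Ĵ, a periodic point p_j and an iterate n such that f^n restricted to Ĵ is a diffeomorphism onto a neighborhood of p_j. -/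
/-!
A subinterval `J` of a branch is mapped by `f` onto an interval of length at least `σ |J|`.
Since only finitely many points of `I` lie outside the branches, an interval inside `I` either
contains a whole branch (between two of these gaps) or contains at most one gap, and
then a subinterval of at least half its length inside the branches. As `σ / 2 > 1`, lengths grow
geometrically until a whole branch is covered, within boundedly many steps once `|J| ≥ δ`, and
each covering pulls back to a subinterval of `J` along the injective branches.

For (b), every branch covers some branch through an interval lying strictly inside it. In the
finite set of branches, following this transitive relation leads to a branch that covers itself;
the intermediate value theorem then gives a fixed point of the corresponding iterate in that
branch, whose orbit never leaves the branches.
-/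

open Set Function

theorem IsPreconnected.exists_subset_of_subset_iUnion {X ι : Type*} [TopologicalSpace X]
    {s : Set X} {V : ι → Set X} (hs : IsPreconnected s) (hne : s.Nonempty)
    (hV : ∀ i, IsOpen (V i)) (hdisj : Pairwise (Disjoint on V)) (hsub : s ⊆ ⋃ i, V i) :
    ∃ i, s ⊆ V i := by
  obtain ⟨x, hx⟩ := hne
  obtain ⟨i, hi⟩ := mem_iUnion.1 (hsub hx)
  refine ⟨i, hs.subset_left_of_subset_union (hV i) (isOpen_biUnion fun j _ => hV j)
    (disjoint_iUnion₂_right.2 fun j hj => hdisj (Ne.symm hj)) (fun y hy => ?_) ⟨x, hx, hi⟩⟩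
  obtain ⟨j, hj⟩ := mem_iUnion.1 (hsub hy)
  by_cases hji : j = i
  · exact Or.inl (hji ▸ hj)
  · exact Or.inr (mem_biUnion (x := j) hji hj)

theorem IsOpen.eq_Ioo_csInf_csSup {S : Set ℝ} (hS : IsOpen S) (hconn : IsPreconnected S)
    (hne : S.Nonempty) (hb : BddBelow S) (ha : BddAbove S) : S = Ioo (sInf S) (sSup S) := by
  refine Subset.antisymm (fun x hx => ⟨?_, ?_⟩)
    (IsConnected.Ioo_csInf_csSup_subset ⟨hne, hconn⟩ hb ha)
  · obtain ⟨y, hyx, hy⟩ := Filter.Eventually.exists_lt (hS.mem_nhds hx)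
    exact (csInf_le hb hy).trans_lt hyx
  · obtain ⟨y, hxy, hy⟩ := Filter.Eventually.exists_gt (hS.mem_nhds hx)
    exact hxy.trans_le (le_csSup ha hy)

theorem ContinuousOn.exists_image_Ioo_eq_Ioo_of_injOn {g : ℝ → ℝ} {c d s t : ℝ}
    (hg : ContinuousOn g (Ioo c d)) (hinj : InjOn g (Ioo c d)) (hst : s < t)
    (hsub : Ioo s t ⊆ g '' Ioo c d) :
    ∃ c' d', c ≤ c' ∧ c' < d' ∧ d' ≤ d ∧ g '' Ioo c' d' = Ioo s t := by
  set P := Ioo c d ∩ g ⁻¹' Ioo s t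
  have himage : g '' P = Ioo s t := by rw [image_inter_preimage, inter_eq_right.2 hsub]
  obtain ⟨x, hx⟩ : P.Nonempty := Nonempty.of_image (himage ▸ nonempty_Ioo.2 hst)
  have hconn : P.OrdConnected := by
    have hst' : (Ioo s t).OrdConnected := ordConnected_Ioo
    obtain ⟨u, hu, hP⟩ : ∃ u, OrdConnected u ∧ P = Ioo c d ∩ u := by
      rcases hg.strictMonoOn_of_injOn_Ioo (hx.1.1.trans hx.1.2) hinj with hmono | hanti
      exacts [hst'.preimage_monotoneOn hmono.monotoneOn, hst'.preimage_antitoneOn hanti.antitoneOn]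
    exact hP ▸ ordConnected_Ioo.inter hu
  have hP : P = Ioo (sInf P) (sSup P) :=
    (hg.isOpen_inter_preimage isOpen_Ioo isOpen_Ioo).eq_Ioo_csInf_csSup hconn.isPreconnected
      ⟨x, hx⟩ ⟨c, fun y hy => hy.1.1.le⟩ ⟨d, fun y hy => hy.1.2.le⟩
  have hx' : x ∈ Ioo (sInf P) (sSup P) := hP ▸ hx
  rw [hP] at himage
  exact ⟨sInf P, sSup P, le_csInf ⟨x, hx⟩ fun y hy => hy.1.1.le, hx'.1.trans hx'.2,
    csSup_le ⟨x, hx⟩ fun y hy => hy.1.2.le, himage⟩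

theorem ContinuousOn.image_Ioo_eq_uIoo_of_injOn {α δ : Type*}
    [ConditionallyCompleteLinearOrder α] [TopologicalSpace α] [OrderTopology α] [DenselyOrdered α]
    [LinearOrder δ] [TopologicalSpace δ] [OrderClosedTopology δ] {g : α → δ} {x y : α}
    (hxy : x ≤ y) (hg : ContinuousOn g (Icc x y)) (hinj : InjOn g (Icc x y)) :
    g '' Ioo x y = uIoo (g x) (g y) := by
  rcases hg.strictMonoOn_of_injOn_Icc' hxy hinj with hmono | hanti
  · rw [hg.image_Ioo_of_strictMonoOn hxy hmono,
      uIoo_of_le (hmono.monotoneOn (left_mem_Icc.2 hxy) (right_mem_Icc.2 hxy) hxy)]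
  · rw [hg.image_Ioo_of_strictAntiOn hxy hanti,
      uIoo_of_ge (hanti.antitoneOn (left_mem_Icc.2 hxy) (right_mem_Icc.2 hxy) hxy)]

theorem injOn_of_hasDerivAt_ne_zero {f f' : ℝ → ℝ} {S : Set ℝ} (hS : S.OrdConnected)
    (hderiv : ∀ x ∈ S, HasDerivAt f (f' x) x) (hne : ∀ x ∈ S, f' x ≠ 0) : InjOn f S := by
  intro x hx y hy hxy
  by_contra hxy'
  wlog hlt : x < y generalizing x y
  · exact this hy hx hxy.symm (Ne.symm hxy') ((Ne.symm hxy').lt_of_le (not_lt.1 hlt))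
  have hsub : Icc x y ⊆ S := hS.out hx hy
  obtain ⟨z, hz, hz0⟩ := exists_hasDerivAt_eq_zero hlt
    (fun z hz => (hderiv z (hsub hz)).continuousAt.continuousWithinAt) hxy
    (fun z hz => hderiv z (hsub (Ioo_subset_Icc_self hz)))
  exact hne z (hsub (Ioo_subset_Icc_self hz)) hz0

theorem mul_sub_le_abs_sub_of_le_abs_deriv {f f' : ℝ → ℝ} {σ x y : ℝ} (hxy : x < y)
    (hderiv : ∀ z ∈ Icc x y, HasDerivAt f (f' z) z) (hexp : ∀ z ∈ Icc x y, σ ≤ |f' z|) :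
    σ * (y - x) ≤ |f y - f x| := by
  obtain ⟨z, hz, hslope⟩ := exists_hasDerivAt_eq_slope f f' hxy
    (fun z hz => (hderiv z hz).continuousAt.continuousWithinAt)
    (fun z hz => hderiv z (Ioo_subset_Icc_self hz))
  have hfxy : f y - f x = f' z * (y - x) := by
    rw [hslope, div_mul_cancel₀ _ (sub_pos.2 hxy).ne']
  rw [hfxy, abs_mul, abs_of_pos (sub_pos.2 hxy)]
  exact mul_le_mul_of_nonneg_right (hexp z (Ioo_subset_Icc_self hz)) (sub_pos.2 hxy).le

theorem exists_lt_lt_lt_and_lt_sub {e₁ e₂ L : ℝ} (h12 : e₁ < e₂) (hL : L < e₂ - e₁) :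
    ∃ x y, e₁ < x ∧ x < y ∧ y < e₂ ∧ L < y - x := by
  obtain ⟨L', hL'⟩ := exists_between (max_lt hL (sub_pos.2 h12))
  have := max_lt_iff.1 hL'.1
  exact ⟨e₁ + (e₂ - e₁ - L') / 2, e₂ - (e₂ - e₁ - L') / 2, by linarith, by linarith,
    by linarith, by linarith⟩

theorem exists_rel_and_rel_self_of_finite {α : Type*} [Finite α] {R : α → α → Prop}
    (htrans : ∀ a b c, R a b → R b c → R a c) (hR : ∀ a, ∃ b, R a b) (a : α) :
    ∃ b, R a b ∧ R b b := by
  choose τ hτ using hR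
  have hiter : ∀ n x, R x (τ^[n + 1] x) := by
    intro n
    induction n with
    | zero => exact hτ
    | succ n ih => exact fun x => iterate_succ_apply' τ _ x ▸ htrans _ _ _ (ih x) (hτ _)
  obtain ⟨i, i', hne, heq⟩ := Finite.exists_ne_map_eq_of_infinite fun n : ℕ => τ^[n + 1] a
  wlog hlt : i < i' generalizing i i'
  · exact this i' i (Ne.symm hne) heq.symm ((Ne.symm hne).lt_of_le (not_lt.1 hlt))
  refine ⟨τ^[i + 1] a, hiter i a, ?_⟩
  have h := hiter (i' - i - 1) (τ^[i + 1] a)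
  rwa [← iterate_add_apply, show i' - i - 1 + 1 + (i + 1) = i' + 1 by omega,
    ← heq] at h

theorem exists_Ioo_subset_Ioo_of_notMem_iUnion {ι : Type*} {p q : ι → ℝ} {a b x y : ℝ}
    (hfin : (Icc a b \ ⋃ j, Ioo (p j) (q j)).Finite) (hax : a ≤ x) (hyb : y ≤ b) (hxy : x < y)
    (hx : x ∉ ⋃ j, Ioo (p j) (q j)) (hy : y ∉ ⋃ j, Ioo (p j) (q j)) :
    ∃ j, Ioo (p j) (q j) ⊆ Ioo x y := by
  obtain ⟨z, hz, hzgap⟩ := ((Ioo_infinite hxy).sdiff hfin).nonempty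
  obtain ⟨j, hj⟩ := mem_iUnion.1 <|
    not_not.1 fun h => hzgap ⟨⟨hax.trans hz.1.le, hz.2.le.trans hyb⟩, h⟩
  refine ⟨j, fun w hw => ⟨?_, ?_⟩⟩
  · by_contra! hwx
    exact hx (mem_iUnion.2 ⟨j, ordConnected_Ioo.out hw hj ⟨hwx, hz.1.le⟩⟩)
  · by_contra! hyw
    exact hy (mem_iUnion.2 ⟨j, ordConnected_Ioo.out hj hw ⟨hz.2.le, hyw⟩⟩)

theorem exists_long_Ioo_subset_of_Ioo_diff_singleton_subset {u v x₀ : ℝ} {W : Set ℝ}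
    (huv : u < v) (hx₀ : x₀ ∈ Icc u v) (hW : Ioo u v \ {x₀} ⊆ W) :
    ∃ s t, u ≤ s ∧ s < t ∧ t ≤ v ∧ v - u ≤ 2 * (t - s) ∧ Ioo s t ⊆ W := by
  rcases le_or_gt (v - u) (2 * (x₀ - u)) with h | h
  · exact ⟨u, x₀, le_rfl, by linarith, hx₀.2, h,
      fun z hz => hW ⟨⟨hz.1, hz.2.trans_le hx₀.2⟩, hz.2.ne⟩⟩
  · exact ⟨x₀, v, hx₀.1, by linarith, le_rfl, by linarith,
      fun z hz => hW ⟨⟨hx₀.1.trans_lt hz.1, hz.2⟩, hz.1.ne'⟩⟩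

theorem exists_Ioo_subset_or_exists_long_Ioo_subset_iUnion {ι : Type*} {p q : ι → ℝ}
    {a b u v : ℝ} (hfin : (Icc a b \ ⋃ j, Ioo (p j) (q j)).Finite) (hau : a ≤ u) (hvb : v ≤ b)
    (huv : u < v) :
    (∃ j, Ioo (p j) (q j) ⊆ Ioo u v) ∨
      ∃ s t, u ≤ s ∧ s < t ∧ t ≤ v ∧ v - u ≤ 2 * (t - s) ∧ Ioo s t ⊆ ⋃ j, Ioo (p j) (q j) := by
  set U := ⋃ j, Ioo (p j) (q j)
  rcases (Ioo u v \ U).subsingleton_or_nontrivial with hsing | ⟨x, hx, y, hy, hxy⟩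
  · right
    obtain ⟨x₀, hx₀, hsub⟩ : ∃ x₀ ∈ Icc u v, Ioo u v \ {x₀} ⊆ U := by
      rcases (Ioo u v \ U).eq_empty_or_nonempty with hempty | ⟨x₀, hx₀⟩
      · exact ⟨u, left_mem_Icc.2 huv.le, fun z hz =>
          not_not.1 fun h => eq_empty_iff_forall_notMem.1 hempty z ⟨hz.1, h⟩⟩
      · exact ⟨x₀, Ioo_subset_Icc_self hx₀.1, fun z hz =>
          not_not.1 fun h => hz.2 (hsing ⟨hz.1, h⟩ hx₀)⟩
    exact exists_long_Ioo_subset_of_Ioo_diff_singleton_subset huv hx₀ hsub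
  · left
    wlog hlt : x < y generalizing x y
    · exact this y hy x hx hxy.symm (hxy.symm.lt_of_le (not_lt.1 hlt))
    obtain ⟨j, hj⟩ := exists_Ioo_subset_Ioo_of_notMem_iUnion hfin (hau.trans hx.1.1.le)
      (hy.1.2.le.trans hvb) hlt hx.2 hy.2
    exact ⟨j, hj.trans (Ioo_subset_Ioo hx.1.1.le hy.1.2.le)⟩

/-- The orbit condition keeps `f^[k]` a composition of branch maps of `f`, whose domain is
`U`. -/
structure IterateDiffeoOn (f : ℝ → ℝ) (U : Set ℝ) (k : ℕ) (S T : Set ℝ) : Prop where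
  image_eq : f^[k] '' S = T
  injOn : InjOn f^[k] S
  differentiableAt : ∀ x ∈ S, DifferentiableAt ℝ f^[k] x
  deriv_ne_zero : ∀ x ∈ S, deriv f^[k] x ≠ 0
  mapsTo : ∀ t < k, MapsTo f^[t] S U

namespace IterateDiffeoOn

variable {f : ℝ → ℝ} {U S T : Set ℝ} {k l : ℕ}

theorem zero (f : ℝ → ℝ) (U S : Set ℝ) : IterateDiffeoOn f U 0 S S where
  image_eq := image_id S
  injOn := injOn_id S
  differentiableAt _ _ := differentiableAt_id
  deriv_ne_zero _ _ := by simp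
  mapsTo _ ht := absurd ht (Nat.not_lt_zero _)

theorem one {f' : ℝ → ℝ} (hS : S ⊆ U) (hinj : InjOn f S)
    (hderiv : ∀ x ∈ S, HasDerivAt f (f' x) x) (hne : ∀ x ∈ S, f' x ≠ 0) :
    IterateDiffeoOn f U 1 S (f '' S) where
  image_eq := by rw [iterate_one]
  injOn := by rwa [iterate_one]
  differentiableAt x hx := by rw [iterate_one]; exact (hderiv x hx).differentiableAt
  deriv_ne_zero x hx := by rw [iterate_one, (hderiv x hx).deriv]; exact hne x hx
  mapsTo t ht := by
    obtain rfl : t = 0 := Nat.lt_one_iff.1 ht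
    exact hS

theorem continuousOn (h : IterateDiffeoOn f U k S T) : ContinuousOn f^[k] S :=
  fun x hx => (h.differentiableAt x hx).continuousAt.continuousWithinAt

theorem differentiableOn (h : IterateDiffeoOn f U k S T) : DifferentiableOn ℝ f^[k] S :=
  fun x hx => (h.differentiableAt x hx).differentiableWithinAt

theorem mono {S' : Set ℝ} (h : IterateDiffeoOn f U k S T) (hS' : S' ⊆ S) :
    IterateDiffeoOn f U k S' (f^[k] '' S') where
  image_eq := rfl
  injOn := h.injOn.mono hS'
  differentiableAt x hx := h.differentiableAt x (hS' hx)
  deriv_ne_zero x hx := h.deriv_ne_zero x (hS' hx)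
  mapsTo t ht := (h.mapsTo t ht).mono_left hS'

theorem trans {T' : Set ℝ} (h₁ : IterateDiffeoOn f U k S T) (h₂ : IterateDiffeoOn f U l T T') :
    IterateDiffeoOn f U (l + k) S T' := by
  have hST : MapsTo f^[k] S T := h₁.image_eq ▸ mapsTo_image _ _
  have hcomp : f^[l + k] = f^[l] ∘ f^[k] := iterate_add f l k
  refine ⟨?_, ?_, fun x hx => ?_, fun x hx => ?_, fun t ht x hx => ?_⟩
  · rw [hcomp, image_comp, h₁.image_eq, h₂.image_eq]
  · exact hcomp ▸ h₂.injOn.comp h₁.injOn hST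
  · exact hcomp ▸ (h₂.differentiableAt _ (hST hx)).comp x (h₁.differentiableAt x hx)
  · rw [hcomp, deriv_comp x (h₂.differentiableAt _ (hST hx)) (h₁.differentiableAt x hx)]
    exact mul_ne_zero (h₂.deriv_ne_zero _ (hST hx)) (h₁.deriv_ne_zero x hx)
  · rcases lt_or_ge t k with htk | hkt
    · exact h₁.mapsTo t htk hx
    · rw [← Nat.sub_add_cancel hkt, iterate_add_apply]
      exact h₂.mapsTo (t - k) (by omega) (hST hx)

theorem exists_Ioo_comp {T' : Set ℝ} {c d s t : ℝ} (h₁ : IterateDiffeoOn f U k (Ioo c d) T)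
    (h₂ : IterateDiffeoOn f U l (Ioo s t) T') (hst : s < t) (hsub : Ioo s t ⊆ T) :
    ∃ c' d', c ≤ c' ∧ c' < d' ∧ d' ≤ d ∧ IterateDiffeoOn f U (l + k) (Ioo c' d') T' := by
  obtain ⟨c', d', hc, hcd, hd, himg⟩ :=
    h₁.continuousOn.exists_image_Ioo_eq_Ioo_of_injOn h₁.injOn hst (h₁.image_eq ▸ hsub)
  exact ⟨c', d', hc, hcd, hd, (himg ▸ h₁.mono (Ioo_subset_Ioo hc hd)).trans h₂⟩

end IterateDiffeoOn

/-- The strict inequalities `p i < c` and `d < q i` are what yield a fixed point when `i = j`. -/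
def Covers {m : ℕ} (f : ℝ → ℝ) (p q : Fin m → ℝ) (i j : Fin m) : Prop :=
  ∃ k c d, 0 < k ∧ p i < c ∧ c < d ∧ d < q i ∧
    IterateDiffeoOn f (⋃ j, Ioo (p j) (q j)) k (Ioo c d) (Ioo (p j) (q j))

namespace Covers

variable {m : ℕ} {f : ℝ → ℝ} {p q : Fin m → ℝ} {i j : Fin m}

theorem trans {l : Fin m} (hij : Covers f p q i j) (hjl : Covers f p q j l) :
    Covers f p q i l := by
  obtain ⟨k, c, d, hk, hic, hcd, hdi, h⟩ := hij
  obtain ⟨k', c', d', -, hjc, hcd', hdj, h'⟩ := hjl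
  obtain ⟨c'', d'', hc, hcd'', hd, h''⟩ :=
    h.exists_Ioo_comp h' hcd' (Ioo_subset_Ioo hjc.le hdj.le)
  exact ⟨k' + k, c'', d'', by omega, hic.trans_le hc, hcd'', hd.trans_lt hdi, h''⟩

theorem exists_isPeriodicPt (h : Covers f p q j j) :
    ∃ x ∈ Ioo (p j) (q j), ∃ T, 0 < T ∧ IsPeriodicPt f T x ∧
      ∀ t, f^[t] x ∈ ⋃ j, Ioo (p j) (q j) := by
  obtain ⟨k, c, d, hk, hpc, hcd, hdq, h⟩ := h
  obtain ⟨x₁, hx₁, hfx₁⟩ : (p j + c) / 2 ∈ f^[k] '' Ioo c d :=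
    h.image_eq ▸ ⟨by linarith, by linarith⟩
  obtain ⟨x₂, hx₂, hfx₂⟩ : (d + q j) / 2 ∈ f^[k] '' Ioo c d :=
    h.image_eq ▸ ⟨by linarith, by linarith⟩
  have hsub : uIcc x₂ x₁ ⊆ Ioo c d := ordConnected_Ioo.uIcc_subset hx₂ hx₁
  obtain ⟨x, hx, hfix⟩ := exists_mem_uIcc_isFixedPt (h.continuousOn.mono hsub)
    (by linarith [hx₂.2]) (by linarith [hx₁.1])
  refine ⟨x, ⟨hpc.trans (hsub hx).1, (hsub hx).2.trans hdq⟩, k, hk, hfix, fun t => ?_⟩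
  rw [← IsPeriodicPt.iterate_mod_apply hfix]
  exact h.mapsTo _ (Nat.mod_lt t hk) (hsub hx)

end Covers

structure IsPiecewiseExpanding {m : ℕ} (a b σ : ℝ) (p q : Fin m → ℝ) (f f' : ℝ → ℝ) :
    Prop where
  lt : ∀ j, p j < q j
  subset_Icc : ∀ j, Ioo (p j) (q j) ⊆ Icc a b
  pairwise_disjoint : Pairwise (Disjoint on fun j => Ioo (p j) (q j))
  finite_gaps : (Icc a b \ ⋃ j, Ioo (p j) (q j)).Finite
  mapsTo : ∀ j, MapsTo f (Ioo (p j) (q j)) (Icc a b)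
  hasDerivAt : ∀ j, ∀ x ∈ Ioo (p j) (q j), HasDerivAt f (f' x) x
  two_lt : 2 < σ
  le_abs_deriv : ∀ j, ∀ x ∈ Ioo (p j) (q j), σ ≤ |f' x|

namespace IsPiecewiseExpanding

variable {m : ℕ} {a b σ : ℝ} {p q : Fin m → ℝ} {f f' : ℝ → ℝ}

theorem sub_le_of_Ioo_subset (hf : IsPiecewiseExpanding a b σ p q f f') {e₁ e₂ : ℝ}
    (h12 : e₁ < e₂) (hJ : Ioo e₁ e₂ ⊆ ⋃ j, Ioo (p j) (q j)) : e₂ - e₁ ≤ b - a := by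
  have h := (closure_Ioo h12.ne).symm ▸
    closure_minimal (hJ.trans (iUnion_subset hf.subset_Icc)) isClosed_Icc
  have := (Icc_subset_Icc_iff h12.le).1 h
  linarith [this.1, this.2]

theorem exists_subset_branch (hf : IsPiecewiseExpanding a b σ p q f f') {e₁ e₂ : ℝ}
    (h12 : e₁ < e₂) (hJ : Ioo e₁ e₂ ⊆ ⋃ j, Ioo (p j) (q j)) :
    ∃ j, Ioo e₁ e₂ ⊆ Ioo (p j) (q j) :=
  isPreconnected_Ioo.exists_subset_of_subset_iUnion (nonempty_Ioo.2 h12) (fun _ => isOpen_Ioo)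
    hf.pairwise_disjoint hJ

theorem exists_iterateDiffeoOn_one (hf : IsPiecewiseExpanding a b σ p q f f') {x y : ℝ}
    {j : Fin m} (hxy : x < y) (hj : Icc x y ⊆ Ioo (p j) (q j)) :
    ∃ u v, a ≤ u ∧ v ≤ b ∧ σ * (y - x) ≤ v - u ∧
      IterateDiffeoOn f (⋃ j, Ioo (p j) (q j)) 1 (Ioo x y) (Ioo u v) := by
  have hderiv z (hz : z ∈ Icc x y) := hf.hasDerivAt j z (hj hz)
  have hne z (hz : z ∈ Icc x y) : f' z ≠ 0 :=
    abs_pos.1 ((by linarith [hf.two_lt] : (0 : ℝ) < σ).trans_le (hf.le_abs_deriv j z (hj hz)))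
  have hinj := injOn_of_hasDerivAt_ne_zero ordConnected_Icc hderiv hne
  have himg := ContinuousOn.image_Ioo_eq_uIoo_of_injOn hxy.le
    (fun z hz => (hderiv z hz).continuousAt.continuousWithinAt) hinj
  have hfx := hf.mapsTo j (hj (left_mem_Icc.2 hxy.le))
  have hfy := hf.mapsTo j (hj (right_mem_Icc.2 hxy.le))
  refine ⟨min (f x) (f y), max (f x) (f y), le_min hfx.1 hfy.1, max_le hfx.2 hfy.2, ?_, ?_⟩
  · rw [max_sub_min_eq_abs]
    exact mul_sub_le_abs_sub_of_le_abs_deriv hxy hderiv fun z hz => hf.le_abs_deriv j z (hj hz)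
  · rw [← uIoo, ← himg]
    exact IterateDiffeoOn.one (fun z hz => mem_iUnion.2 ⟨j, hj (Ioo_subset_Icc_self hz)⟩)
      (hinj.mono Ioo_subset_Icc_self) (fun z hz => hderiv z (Ioo_subset_Icc_self hz))
      (fun z hz => hne z (Ioo_subset_Icc_self hz))

theorem exists_iterateDiffeoOn_of_lt_mul_pow (hf : IsPiecewiseExpanding a b σ p q f f') :
    ∀ (n : ℕ) {e₁ e₂ : ℝ}, e₁ < e₂ → Ioo e₁ e₂ ⊆ ⋃ j, Ioo (p j) (q j) →
      b - a < (e₂ - e₁) * (σ / 2) ^ n →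
      ∃ k, 0 < k ∧ k ≤ n ∧ ∃ c d, e₁ ≤ c ∧ c < d ∧ d ≤ e₂ ∧ ∃ j,
        IterateDiffeoOn f (⋃ j, Ioo (p j) (q j)) k (Ioo c d) (Ioo (p j) (q j))
  | 0, e₁, e₂, h12, hJ, hlen => by
    linarith [hf.sub_le_of_Ioo_subset h12 hJ, (pow_zero (σ / 2)) ▸ hlen]
  | n + 1, e₁, e₂, h12, hJ, hlen => by
    have hρ : 0 < (σ / 2) ^ (n + 1) := pow_pos (by linarith [hf.two_lt]) _
    obtain ⟨j₀, hj₀⟩ := hf.exists_subset_branch h12 hJ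
    obtain ⟨x, y, hx, hxy, hy, hlen'⟩ :=
      exists_lt_lt_lt_and_lt_sub h12 ((div_lt_iff₀ hρ).2 hlen)
    obtain ⟨u, v, hu, hv, hσuv, h₁⟩ :=
      hf.exists_iterateDiffeoOn_one hxy ((Icc_subset_Ioo hx hy).trans hj₀)
    have huv : u < v := by nlinarith [hf.two_lt]
    obtain ⟨l, hl, s, t, hs, hst, ht, j, h₂⟩ : ∃ l ≤ n, ∃ s t, u ≤ s ∧ s < t ∧ t ≤ v ∧ ∃ j,
        IterateDiffeoOn f (⋃ j, Ioo (p j) (q j)) l (Ioo s t) (Ioo (p j) (q j)) := by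
      rcases exists_Ioo_subset_or_exists_long_Ioo_subset_iUnion hf.finite_gaps hu hv huv with
        ⟨j, hj⟩ | ⟨s, t, hs, hst, ht, hlong, hU⟩
      · have := (Ioo_subset_Ioo_iff (hf.lt j)).1 hj
        exact ⟨0, n.zero_le, p j, q j, this.1, hf.lt j, this.2, j, .zero _ _ _⟩
      · have hlen'' : b - a < (t - s) * (σ / 2) ^ n := by
          rw [div_lt_iff₀ hρ, pow_succ] at hlen'
          nlinarith [pow_pos (by linarith [hf.two_lt] : (0 : ℝ) < σ / 2) n]
        obtain ⟨l, -, hl, c, d, hc, hcd, hd, j, h⟩ :=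
          exists_iterateDiffeoOn_of_lt_mul_pow hf n hst hU hlen''
        exact ⟨l, hl, c, d, hs.trans hc, hcd, hd.trans ht, j, h⟩
    obtain ⟨c, d, hc, hcd, hd, h⟩ := h₁.exists_Ioo_comp h₂ hst (Ioo_subset_Ioo hs ht)
    exact ⟨l + 1, l.succ_pos, by omega, c, d, hx.le.trans hc, hcd, hd.trans hy.le, j, h⟩

theorem exists_iterateDiffeoOn_of_le_sub (hf : IsPiecewiseExpanding a b σ p q f f') {δ : ℝ}
    (hδ : 0 < δ) :
    ∃ n, ∀ e₁ e₂, e₁ < e₂ → δ ≤ e₂ - e₁ → Ioo e₁ e₂ ⊆ ⋃ j, Ioo (p j) (q j) →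
      ∃ k, 0 < k ∧ k ≤ n ∧ ∃ c d, e₁ ≤ c ∧ c < d ∧ d ≤ e₂ ∧ ∃ j,
        IterateDiffeoOn f (⋃ j, Ioo (p j) (q j)) k (Ioo c d) (Ioo (p j) (q j)) := by
  obtain ⟨n, hn⟩ := pow_unbounded_of_one_lt ((b - a) / δ) (by linarith [hf.two_lt] : 1 < σ / 2)
  refine ⟨n, fun e₁ e₂ h12 hδle hJ => hf.exists_iterateDiffeoOn_of_lt_mul_pow n h12 hJ ?_⟩
  rw [div_lt_iff₀ hδ] at hn
  nlinarith [pow_pos (by linarith [hf.two_lt] : (0 : ℝ) < σ / 2) n]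

theorem exists_iterateDiffeoOn (hf : IsPiecewiseExpanding a b σ p q f f') {e₁ e₂ : ℝ}
    (h12 : e₁ < e₂) (hJ : Ioo e₁ e₂ ⊆ ⋃ j, Ioo (p j) (q j)) :
    ∃ k, 0 < k ∧ ∃ c d, e₁ ≤ c ∧ c < d ∧ d ≤ e₂ ∧ ∃ j,
      IterateDiffeoOn f (⋃ j, Ioo (p j) (q j)) k (Ioo c d) (Ioo (p j) (q j)) :=
  let ⟨_, hn⟩ := hf.exists_iterateDiffeoOn_of_le_sub (sub_pos.2 h12)
  let ⟨k, hk, _, hJ'⟩ := hn e₁ e₂ h12 le_rfl hJ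
  ⟨k, hk, hJ'⟩

theorem exists_covers (hf : IsPiecewiseExpanding a b σ p q f f') (i : Fin m) :
    ∃ j, Covers f p q i j := by
  have hpq := hf.lt i
  obtain ⟨k, hk, c, d, hc, hcd, hd, j, h⟩ :=
    hf.exists_iterateDiffeoOn (e₁ := (2 * p i + q i) / 3) (e₂ := (p i + 2 * q i) / 3)
      (by linarith) fun x hx => mem_iUnion.2 ⟨i, by constructor <;> linarith [hx.1, hx.2]⟩
  exact ⟨j, k, c, d, hk, by linarith, hcd, by linarith, h⟩

theorem exists_periodic_orbits (hf : IsPiecewiseExpanding a b σ p q f f') :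
    ∃ x : Fin m → ℝ, (∀ i, (∃ T, 0 < T ∧ IsPeriodicPt f T (x i)) ∧
        ∀ t, f^[t] (x i) ∈ ⋃ j, Ioo (p j) (q j)) ∧
      ∀ e₁ e₂, e₁ < e₂ → Ioo e₁ e₂ ⊆ ⋃ j, Ioo (p j) (q j) →
        ∃ c d, e₁ ≤ c ∧ c < d ∧ d ≤ e₂ ∧ ∃ i n, f^[n] '' Ioo c d ∈ nhds (x i) ∧
          IterateDiffeoOn f (⋃ j, Ioo (p j) (q j)) n (Ioo c d) (f^[n] '' Ioo c d) := by
  choose r hr using exists_rel_and_rel_self_of_finite (fun _ _ _ => Covers.trans) hf.exists_covers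
  choose x hx T hT hper horb using fun i => (hr i).2.exists_isPeriodicPt
  refine ⟨x, fun i => ⟨⟨T i, hT i, hper i⟩, horb i⟩, fun e₁ e₂ h12 hJ => ?_⟩
  obtain ⟨k, -, c, d, hc, hcd, hd, i, h⟩ := hf.exists_iterateDiffeoOn h12 hJ
  obtain ⟨k', c', d', -, hpc, hcd', hdq, h'⟩ := (hr i).1
  obtain ⟨c'', d'', hc', hcd'', hd', h''⟩ :=
    h.exists_Ioo_comp h' hcd' (Ioo_subset_Ioo hpc.le hdq.le)
  refine ⟨c'', d'', hc.trans hc', hcd'', hd'.trans hd, i, k' + k, ?_, h''.mono Subset.rfl⟩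
  rw [h''.image_eq]
  exact isOpen_Ioo.mem_nhds (hx i)

end IsPiecewiseExpanding

theorem piecewise_expanding_interval_covering_and_periodic_orbits_general
    (a b : ℝ)
    (m : ℕ) (p q : Fin m → ℝ)
    (hpq : ∀ j, p j < q j)
    (hsub : ∀ j, Ioo (p j) (q j) ⊆ Icc a b)
    (hdisj : ∀ j j', j ≠ j' → Disjoint (Ioo (p j) (q j)) (Ioo (p j') (q j')))
    (hfin : (Icc a b \ ⋃ j, Ioo (p j) (q j)).Finite)
    (f : ℝ → ℝ) (f' : ℝ → ℝ)
    (hmaps : ∀ j, MapsTo f (Ioo (p j) (q j)) (Icc a b))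
    (hderiv : ∀ j, ∀ x ∈ Ioo (p j) (q j), HasDerivAt f (f' x) x)
    (σ : ℝ) (hσ : 2 < σ)
    (hexp : ∀ j, ∀ x ∈ Ioo (p j) (q j), σ ≤ |f' x|) :
    -- (a)
    (∃ δ₀ > 0, ∀ δ, 0 < δ → δ ≤ δ₀ → ∃ n : ℕ,
      ∀ e₁ e₂ : ℝ, e₁ < e₂ → δ ≤ e₂ - e₁ →
        Ioo e₁ e₂ ⊆ (⋃ j, Ioo (p j) (q j)) →
        ∃ k ≤ n, ∃ e₁' e₂' : ℝ, e₁ ≤ e₁' ∧ e₁' < e₂' ∧ e₂' ≤ e₂ ∧ ∃ j,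
          f^[k] '' Ioo e₁' e₂' = Ioo (p j) (q j) ∧
          InjOn (f^[k]) (Ioo e₁' e₂') ∧
          DifferentiableOn ℝ (f^[k]) (Ioo e₁' e₂') ∧
          ∀ x ∈ Ioo e₁' e₂', deriv (f^[k]) x ≠ 0) ∧
    -- (b)
    (∃ kk : ℕ, ∃ pp : Fin kk → ℝ,
      (∀ i, (∃ T : ℕ, 1 ≤ T ∧ f^[T] (pp i) = pp i) ∧
        ∀ t : ℕ, f^[t] (pp i) ∈ ⋃ j, Ioo (p j) (q j)) ∧
      ∀ e₁ e₂ : ℝ, e₁ < e₂ → Ioo e₁ e₂ ⊆ (⋃ j, Ioo (p j) (q j)) →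
        ∃ e₁' e₂' : ℝ, e₁ ≤ e₁' ∧ e₁' < e₂' ∧ e₂' ≤ e₂ ∧ ∃ i, ∃ n : ℕ,
          f^[n] '' Ioo e₁' e₂' ∈ nhds (pp i) ∧
          InjOn (f^[n]) (Ioo e₁' e₂') ∧
          DifferentiableOn ℝ (f^[n]) (Ioo e₁' e₂') ∧
          ∀ x ∈ Ioo e₁' e₂', deriv (f^[n]) x ≠ 0) := by
  have hf : IsPiecewiseExpanding a b σ p q f f' :=
    ⟨hpq, hsub, fun i j => hdisj i j, hfin, hmaps, hderiv, hσ, hexp⟩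
  refine ⟨⟨1, one_pos, fun δ hδ _ => ?_⟩, ?_⟩
  · obtain ⟨n, hn⟩ := hf.exists_iterateDiffeoOn_of_le_sub hδ
    refine ⟨n, fun e₁ e₂ h12 hδle hJ => ?_⟩
    obtain ⟨k, -, hkn, c, d, hc, hcd, hd, j, h⟩ := hn e₁ e₂ h12 hδle hJ
    exact ⟨k, hkn, c, d, hc, hcd, hd, j, h.image_eq, h.injOn, h.differentiableOn,
      h.deriv_ne_zero⟩
  · obtain ⟨x, hx, hcover⟩ := hf.exists_periodic_orbits
    refine ⟨m, x, fun i => ⟨(hx i).1.imp fun _ hT => ⟨hT.1, hT.2⟩, (hx i).2⟩,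
      fun e₁ e₂ h12 hJ => ?_⟩
    obtain ⟨c, d, hc, hcd, hd, i, n, hnhds, h⟩ := hcover e₁ e₂ h12 hJ
    exact ⟨c, d, hc, hcd, hd, i, n, hnhds, h.injOn, h.differentiableOn, h.deriv_ne_zero⟩

/-- **Topological properties of piecewise `C^1` expanding interval maps with finitely
many branches** (cf. [Araújo–Pacifico, Lemma 6.30]).

Let `f : Σ_j I_j → I` be piecewise `C^1` expanding with finitely many branches
`I_j = (p j, q j)`, `|f'| ≥ σ > 2` on each branch, and `I ∖ ⋃_j I_j` finite.  Then:
(a) for each sufficiently small `δ > 0` there is `n = n(δ)` such that every nonempty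
open interval `J ⊆ ⋃_j I_j` with `|J| ≥ δ` has a subinterval `Ĵ` mapped by some
`f^k`, `0 ≤ k ≤ n`, diffeomorphically onto some branch `I_j`; and
(b) `f` admits finitely many periodic orbits contained in `⋃_j I_j` such that every
nonempty open interval `J ⊆ ⋃_j I_j` has an open subinterval mapped by some iterate
of `f` diffeomorphically onto a neighborhood of one of these periodic points. -/
theorem piecewise_expanding_interval_covering_and_periodic_orbits
    (a b : ℝ) (hab : a < b)
    (m : ℕ) (hm : 1 ≤ m) (p q : Fin m → ℝ)
    (hpq : ∀ j, p j < q j)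
    (hsub : ∀ j, Ioo (p j) (q j) ⊆ Icc a b)
    (hdisj : ∀ j j', j ≠ j' → Disjoint (Ioo (p j) (q j)) (Ioo (p j') (q j')))
    (hfin : (Icc a b \ ⋃ j, Ioo (p j) (q j)).Finite)
    (f : ℝ → ℝ) (f' : ℝ → ℝ)
    (hmaps : ∀ j, MapsTo f (Ioo (p j) (q j)) (Icc a b))
    (hderiv : ∀ j, ∀ x ∈ Ioo (p j) (q j), HasDerivAt f (f' x) x)
    (hderivcont : ∀ j, ContinuousOn f' (Ioo (p j) (q j)))
    (σ : ℝ) (hσ : 2 < σ)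
    (hexp : ∀ j, ∀ x ∈ Ioo (p j) (q j), σ ≤ |f' x|) :
    -- (a)
    (∃ δ₀ > 0, ∀ δ, 0 < δ → δ ≤ δ₀ → ∃ n : ℕ,
      ∀ e₁ e₂ : ℝ, e₁ < e₂ → δ ≤ e₂ - e₁ →
        Ioo e₁ e₂ ⊆ (⋃ j, Ioo (p j) (q j)) →
        ∃ k ≤ n, ∃ e₁' e₂' : ℝ, e₁ ≤ e₁' ∧ e₁' < e₂' ∧ e₂' ≤ e₂ ∧ ∃ j,
          f^[k] '' Ioo e₁' e₂' = Ioo (p j) (q j) ∧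
          InjOn (f^[k]) (Ioo e₁' e₂') ∧
          DifferentiableOn ℝ (f^[k]) (Ioo e₁' e₂') ∧
          ∀ x ∈ Ioo e₁' e₂', deriv (f^[k]) x ≠ 0) ∧
    -- (b)
    (∃ kk : ℕ, ∃ pp : Fin kk → ℝ,
      (∀ i, (∃ T : ℕ, 1 ≤ T ∧ f^[T] (pp i) = pp i) ∧
        ∀ t : ℕ, f^[t] (pp i) ∈ ⋃ j, Ioo (p j) (q j)) ∧
      ∀ e₁ e₂ : ℝ, e₁ < e₂ → Ioo e₁ e₂ ⊆ (⋃ j, Ioo (p j) (q j)) →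
        ∃ e₁' e₂' : ℝ, e₁ ≤ e₁' ∧ e₁' < e₂' ∧ e₂' ≤ e₂ ∧ ∃ i, ∃ n : ℕ,
          f^[n] '' Ioo e₁' e₂' ∈ nhds (pp i) ∧
          InjOn (f^[n]) (Ioo e₁' e₂') ∧
          DifferentiableOn ℝ (f^[n]) (Ioo e₁' e₂') ∧
          ∀ x ∈ Ioo e₁' e₂', deriv (f^[n]) x ≠ 0) :=
  piecewise_expanding_interval_covering_and_periodic_orbits_general a b m p q hpq hsub hdisj hfin f
    f' hmaps hderiv σ hσ hexp
end

section
/- In the induced Gibbs–Markov setting, the induced roof function r(x) = Σ_{j=0}^{R(x)−1} τ(f^j(x)) satisfies sup|(r∘h)'| < ∞ uniformly over all inverse branches h of F; more precisely, there is a constant C > 0 such that |(r∘h)'(x)| ≤ C Σ_{j=0}^{∞} σ^{(1−b)j} < ∞ for all x ∈ Δ and all inverse branches h : Δ → closure(J), J ∈ 𝒫. -/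
open MeasureTheory Set

noncomputable section

/-- **Uniformly bounded derivative of the induced roof function along inverse
branches** (condition (3) for the induced semiflow).

In the induced Gibbs–Markov setting, the induced roof function
`r(x) = Σ_{j<R(x)} τ(f^j x)` satisfies `sup |(r∘h)'| < ∞` uniformly over all inverse
branches `h` of `F = f^R`; more precisely `|(r∘h)'(x)| ≤ C Σ_j σ^{(1-b)j} < ∞`,
where, by the chain rule, `(r∘h)'` is expressed through the derivatives of `τ` and of
the iterates of `f` along the branch. -/
theorem induced_roof_function_branch_derivative_bounded
    -- the critical set `𝒟 ⊆ I = [0,1]`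
    (D : Set ℝ) (hDfin : D.Finite) (hDsub : D ⊆ Icc (0:ℝ) 1)
    (σ bb : ℝ) (hσ : σ ∈ Ioo (0:ℝ) 1) (hb : bb ∈ Ioo (0:ℝ) (1/2))
    -- `f` is `C^1` on `I ∖ 𝒟`
    (f Df : ℝ → ℝ)
    (hf : ∀ x ∈ Icc (0:ℝ) 1 \ D, HasDerivAt f (Df x) x)
    (hfc : ContinuousOn Df (Icc (0:ℝ) 1 \ D))
    (hfmaps : MapsTo f (Icc (0:ℝ) 1 \ D) (Icc (0:ℝ) 1))
    -- `τ : I ∖ 𝒟 → (0,∞)` is `C^1`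
    (τ Dτ : ℝ → ℝ)
    (hτ : ∀ x ∈ Icc (0:ℝ) 1 \ D, HasDerivAt τ (Dτ x) x)
    (hτpos : ∀ x ∈ Icc (0:ℝ) 1 \ D, 0 < τ x)
    -- `Δ = [cΔ, dΔ] ⊆ I` with a countable partition `𝒫` into open intervals
    -- `(cc m, dd m)` (mod Lebesgue-null sets)
    (cΔ dΔ : ℝ) (hΔ : cΔ < dΔ) (hΔsub : Icc cΔ dΔ ⊆ Icc (0:ℝ) 1)
    (cc dd : ℕ → ℝ) (hcd : ∀ m, cc m < dd m)
    (hcellsub : ∀ m, Ioo (cc m) (dd m) ⊆ Icc cΔ dΔ)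
    (hdisj : ∀ m m', m ≠ m' → Disjoint (Ioo (cc m) (dd m)) (Ioo (cc m') (dd m')))
    (hfull : volume (Icc cΔ dΔ \ ⋃ m, Ioo (cc m) (dd m)) = 0)
    -- the inducing time `R`, constant `= Rt m` on each partition element
    (Rt : ℕ → ℕ) (hRt : ∀ m, 1 ≤ Rt m)
    (R : ℝ → ℕ) (hR : ∀ m, ∀ x ∈ Ioo (cc m) (dd m), R x = Rt m)
    -- the full-branch induced map `F = f^R : Δ → Δ` with inverse branches `h m`
    (F : ℝ → ℝ) (hF : ∀ m, ∀ x ∈ Ioo (cc m) (dd m), F x = f^[Rt m] x)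
    (hFmaps : ∀ m, MapsTo F (Ioo (cc m) (dd m)) (Icc cΔ dΔ))
    (h : ℕ → ℝ → ℝ)
    (hcont : ∀ m, ContinuousOn (h m) (Icc cΔ dΔ))
    (himage : ∀ m, h m '' Icc cΔ dΔ = Icc (cc m) (dd m))
    (hinv : ∀ m, ∀ x ∈ Icc cΔ dΔ, F (h m x) = x)
    -- each return time `ℓ = Rt m` is a `(σ,δ)`-hyperbolic time for every point
    -- of the corresponding partition element:
    -- `|(f^j)'(x)| ≤ σ^{ℓ-j} |F'(x)|` and `dist(f^j x, 𝒟) ≥ σ^{b(ℓ-j)}`, `0 ≤ j < ℓ`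
    (hhyp : ∀ m, ∀ x ∈ Ioo (cc m) (dd m), ∀ j < Rt m,
      (∏ i ∈ Finset.range j, |Df (f^[i] x)|)
          ≤ σ ^ (((Rt m : ℝ) - j)) * ∏ i ∈ Finset.range (Rt m), |Df (f^[i] x)| ∧
      σ ^ (bb * ((Rt m : ℝ) - j)) ≤ Metric.infDist (f^[j] x) D)
    -- `|τ'(x)| ≤ C₀ / dist(x, 𝒟)`
    (C₀ : ℝ) (hC₀ : 0 < C₀)
    (hτ' : ∀ x ∈ Icc (0:ℝ) 1 \ D, |Dτ x| ≤ C₀ / Metric.infDist x D) :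
    Summable (fun j : ℕ => σ ^ ((1 - bb) * (j : ℝ))) ∧
    ∃ C > 0, ∀ m : ℕ, ∀ x ∈ Icc cΔ dΔ,
      |∑ j ∈ Finset.range (Rt m),
          Dτ (f^[j] (h m x)) * (∏ i ∈ Finset.range j, Df (f^[i] (h m x))) /
            (∏ i ∈ Finset.range (Rt m), Df (f^[i] (h m x)))|
        ≤ C * ∑' j : ℕ, σ ^ ((1 - bb) * (j : ℝ)) := by

  obtain ⟨hσ0, hσ1⟩ := hσ
  obtain ⟨hb0, hb2⟩ := hb
  have h1b : 0 < 1 - bb := by linarith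
  -- geometric form and summability
  have hgeom : ∀ j : ℕ, σ ^ ((1 - bb) * (j : ℝ)) = (σ ^ (1 - bb)) ^ j := by
    intro j
    rw [← Real.rpow_natCast (σ ^ (1 - bb)) j, ← Real.rpow_mul hσ0.le]
  have hsum : Summable (fun j : ℕ => σ ^ ((1 - bb) * (j : ℝ))) := by
    simp only [hgeom]
    exact summable_geometric_of_lt_one (Real.rpow_nonneg hσ0.le _)
      (Real.rpow_lt_one hσ0.le hσ1 h1b)
  have hgnn : ∀ j : ℕ, 0 ≤ σ ^ ((1 - bb) * (j : ℝ)) :=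
    fun j => (Real.rpow_pos_of_pos hσ0 _).le
  refine ⟨hsum, C₀, hC₀, ?_⟩
  intro m x hx
  set ℓ := Rt m with hℓdef
  have hℓ1 : 1 ≤ ℓ := hRt m
  set y₀ := h m x with hy₀def
  have hy₀mem : y₀ ∈ Icc (cc m) (dd m) := by
    rw [← himage m]; exact ⟨x, hx, rfl⟩
  set L := nhdsWithin y₀ (Ioo (cc m) (dd m)) with hLdef
  have hLne : L.NeBot := by
    rw [hLdef, ← mem_closure_iff_nhdsWithin_neBot, closure_Ioo (hcd m).ne]
    exact hy₀mem
  -- orbit of interior points stays in Icc 0 1 \ D up to time ℓ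
  have horb : ∀ j < ℓ, ∀ y ∈ Ioo (cc m) (dd m), f^[j] y ∈ Icc (0:ℝ) 1 \ D := by
    intro j
    induction j with
    | zero =>
      intro _ y hy
      refine ⟨hΔsub (hcellsub m hy), fun hD => ?_⟩
      have h1 := (hhyp m y hy 0 hℓ1).2
      simp only [Function.iterate_zero_apply] at h1 hD
      rw [Metric.infDist_zero_of_mem hD] at h1
      exact absurd h1 (not_le.mpr (Real.rpow_pos_of_pos hσ0 _))
    | succ j ih =>
      intro hj y hy
      have hprev := ih (Nat.lt_of_succ_lt hj) y hy
      rw [Function.iterate_succ_apply']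
      refine ⟨hfmaps hprev, fun hD => ?_⟩
      have h1 := (hhyp m y hy (j + 1) hj).2
      rw [Function.iterate_succ_apply', Metric.infDist_zero_of_mem hD] at h1
      exact absurd h1 (not_le.mpr (Real.rpow_pos_of_pos hσ0 _))
  -- orbit of y₀ : continuity extension
  have horb₀ : ∀ j < ℓ,
      Filter.Tendsto (f^[j]) L (nhds (f^[j] y₀)) ∧ f^[j] y₀ ∈ Icc (0:ℝ) 1 \ D := by
    intro j
    induction j with
    | zero =>
      intro _
      have ht : Filter.Tendsto (f^[0]) L (nhds (f^[0] y₀)) := by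
        simpa using (Filter.tendsto_id.mono_left nhdsWithin_le_nhds :
          Filter.Tendsto id L (nhds y₀))
      refine ⟨ht, ?_⟩
      have hy01 : y₀ ∈ Icc (0:ℝ) 1 := by
        apply hΔsub
        have : y₀ ∈ closure (Ioo (cc m) (dd m)) := by
          rw [closure_Ioo (hcd m).ne]; exact hy₀mem
        exact closure_minimal (hcellsub m) isClosed_Icc this
      refine ⟨hy01, fun hD => ?_⟩
      have htd : Filter.Tendsto (fun y => Metric.infDist (f^[0] y) D) L
          (nhds (Metric.infDist (f^[0] y₀) D)) :=
        ((Metric.continuous_infDist_pt D).continuousAt).tendsto.comp ht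
      have hev : ∀ᶠ y in L, σ ^ (bb * ((ℓ : ℝ) - 0)) ≤ Metric.infDist (f^[0] y) D := by
        filter_upwards [eventually_mem_nhdsWithin] with y hy
        exact_mod_cast (hhyp m y hy 0 hℓ1).2
      have := ge_of_tendsto htd hev
      rw [Metric.infDist_zero_of_mem hD] at this
      exact absurd this (not_le.mpr (Real.rpow_pos_of_pos hσ0 _))
    | succ j ih =>
      intro hj
      obtain ⟨ht, hmem⟩ := ih (Nat.lt_of_succ_lt hj)
      have hcf : ContinuousAt f (f^[j] y₀) := (hf _ hmem).continuousAt
      have ht' : Filter.Tendsto (fun y => f^[j+1] y) L (nhds (f^[j+1] y₀)) := by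
        simp only [Function.iterate_succ_apply']
        exact hcf.tendsto.comp ht
      refine ⟨ht', ?_⟩
      have h01 : f^[j+1] y₀ ∈ Icc (0:ℝ) 1 := by
        rw [Function.iterate_succ_apply']; exact hfmaps hmem
      refine ⟨h01, fun hD => ?_⟩
      have htd : Filter.Tendsto (fun y => Metric.infDist (f^[j+1] y) D) L
          (nhds (Metric.infDist (f^[j+1] y₀) D)) :=
        ((Metric.continuous_infDist_pt D).continuousAt).tendsto.comp ht'
      have hev : ∀ᶠ y in L, σ ^ (bb * ((ℓ : ℝ) - (j+1 : ℕ))) ≤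
          Metric.infDist (f^[j+1] y) D := by
        filter_upwards [eventually_mem_nhdsWithin] with y hy
        exact (hhyp m y hy (j+1) hj).2
      have := ge_of_tendsto htd hev
      rw [Metric.infDist_zero_of_mem hD] at this
      exact absurd this (not_le.mpr (Real.rpow_pos_of_pos hσ0 _))
  -- tendsto of |Df (f^[i] ·)| along L, for i < ℓ
  have htDf : ∀ i < ℓ, Filter.Tendsto (fun y => |Df (f^[i] y)|) L
      (nhds (|Df (f^[i] y₀)|)) := by
    intro i hi
    have ht1 : Filter.Tendsto (f^[i]) L (nhdsWithin (f^[i] y₀) (Icc (0:ℝ) 1 \ D)) := by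
      rw [tendsto_nhdsWithin_iff]
      refine ⟨(horb₀ i hi).1, ?_⟩
      filter_upwards [eventually_mem_nhdsWithin] with y hy
      exact horb i hi y hy
    exact (Filter.Tendsto.comp (hfc _ (horb₀ i hi).2) ht1).abs
  -- hhyp extended to y₀
  have hhyp' : ∀ j < ℓ,
      (∏ i ∈ Finset.range j, |Df (f^[i] y₀)|)
          ≤ σ ^ (((ℓ : ℝ) - j)) * ∏ i ∈ Finset.range ℓ, |Df (f^[i] y₀)| ∧
      σ ^ (bb * ((ℓ : ℝ) - j)) ≤ Metric.infDist (f^[j] y₀) D := by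
    intro j hj
    constructor
    · have hta : Filter.Tendsto (fun y => ∏ i ∈ Finset.range j, |Df (f^[i] y)|) L
          (nhds (∏ i ∈ Finset.range j, |Df (f^[i] y₀)|)) :=
        tendsto_finset_prod _ (fun i hi =>
          htDf i (lt_of_lt_of_le (Finset.mem_range.mp hi) hj.le))
      have htb : Filter.Tendsto
          (fun y => σ ^ (((ℓ : ℝ) - j)) * ∏ i ∈ Finset.range ℓ, |Df (f^[i] y)|) L
          (nhds (σ ^ (((ℓ : ℝ) - j)) * ∏ i ∈ Finset.range ℓ, |Df (f^[i] y₀)|)) :=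
        (tendsto_finset_prod _ (fun i hi =>
          htDf i (Finset.mem_range.mp hi))).const_mul _
      refine le_of_tendsto_of_tendsto hta htb ?_
      filter_upwards [eventually_mem_nhdsWithin] with y hy
      exact (hhyp m y hy j hj).1
    · have htd : Filter.Tendsto (fun y => Metric.infDist (f^[j] y) D) L
          (nhds (Metric.infDist (f^[j] y₀) D)) :=
        ((Metric.continuous_infDist_pt D).continuousAt).tendsto.comp (horb₀ j hj).1
      refine ge_of_tendsto htd ?_
      filter_upwards [eventually_mem_nhdsWithin] with y hy
      exact (hhyp m y hy j hj).2
  -- main estimate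
  have hterm : ∀ j < ℓ,
      |Dτ (f^[j] y₀) * (∏ i ∈ Finset.range j, Df (f^[i] y₀)) /
        (∏ i ∈ Finset.range ℓ, Df (f^[i] y₀))|
      ≤ C₀ * σ ^ ((1 - bb) * (((ℓ - j : ℕ)) : ℝ)) := by
    intro j hj
    have hcast : ((ℓ - j : ℕ) : ℝ) = (ℓ : ℝ) - j := by
      rw [Nat.cast_sub hj.le]
    set Pj := ∏ i ∈ Finset.range j, Df (f^[i] y₀) with hPj
    set Pl := ∏ i ∈ Finset.range ℓ, Df (f^[i] y₀) with hPl
    by_cases hPl0 : Pl = 0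
    · rw [hPl0, div_zero, abs_zero]
      exact mul_nonneg hC₀.le (hgnn _)
    · have hPlpos : 0 < |Pl| := abs_pos.mpr hPl0
      have habs : |Dτ (f^[j] y₀) * Pj / Pl| = |Dτ (f^[j] y₀)| * (|Pj| / |Pl|) := by
        rw [abs_div, abs_mul, mul_div_assoc]
      rw [habs]
      have hd : σ ^ (bb * ((ℓ : ℝ) - j)) ≤ Metric.infDist (f^[j] y₀) D := (hhyp' j hj).2
      have hdpos : (0:ℝ) < σ ^ (bb * ((ℓ : ℝ) - j)) := Real.rpow_pos_of_pos hσ0 _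
      have hDτb : |Dτ (f^[j] y₀)| ≤ C₀ / σ ^ (bb * ((ℓ : ℝ) - j)) := by
        refine (hτ' _ (horb₀ j hj).2).trans ?_
        exact div_le_div_of_nonneg_left hC₀.le hdpos hd
      have hPb : |Pj| / |Pl| ≤ σ ^ (((ℓ : ℝ) - j)) := by
        rw [div_le_iff₀ hPlpos]
        calc |Pj| = ∏ i ∈ Finset.range j, |Df (f^[i] y₀)| := Finset.abs_prod _ _
          _ ≤ σ ^ (((ℓ : ℝ) - j)) * ∏ i ∈ Finset.range ℓ, |Df (f^[i] y₀)| := (hhyp' j hj).1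
          _ = σ ^ (((ℓ : ℝ) - j)) * |Pl| := by rw [hPl, Finset.abs_prod]
      calc |Dτ (f^[j] y₀)| * (|Pj| / |Pl|)
          ≤ (C₀ / σ ^ (bb * ((ℓ : ℝ) - j))) * σ ^ (((ℓ : ℝ) - j)) := by
            apply mul_le_mul hDτb hPb (div_nonneg (abs_nonneg _) (abs_nonneg _))
            positivity
        _ = C₀ * σ ^ ((1 - bb) * (((ℓ - j : ℕ)) : ℝ)) := by
            rw [hcast, div_mul_eq_mul_div, mul_div_assoc, ← Real.rpow_sub hσ0]
            ring_nf
  -- sum it up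
  have g_def : ∀ k : ℕ, (0:ℝ) ≤ σ ^ ((1 - bb) * (k : ℝ)) := hgnn
  calc |∑ j ∈ Finset.range ℓ,
          Dτ (f^[j] y₀) * (∏ i ∈ Finset.range j, Df (f^[i] y₀)) /
            (∏ i ∈ Finset.range ℓ, Df (f^[i] y₀))|
      ≤ ∑ j ∈ Finset.range ℓ,
          |Dτ (f^[j] y₀) * (∏ i ∈ Finset.range j, Df (f^[i] y₀)) /
            (∏ i ∈ Finset.range ℓ, Df (f^[i] y₀))| := Finset.abs_sum_le_sum_abs _ _
    _ ≤ ∑ j ∈ Finset.range ℓ, C₀ * σ ^ ((1 - bb) * (((ℓ - j : ℕ)) : ℝ)) :=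
        Finset.sum_le_sum (fun j hj => hterm j (Finset.mem_range.mp hj))
    _ = C₀ * ∑ j ∈ Finset.range ℓ, σ ^ ((1 - bb) * (((ℓ - j : ℕ)) : ℝ)) := by
        rw [Finset.mul_sum]
    _ = C₀ * ∑ j ∈ Finset.range ℓ, σ ^ ((1 - bb) * (((j + 1 : ℕ)) : ℝ)) := by
        congr 1
        rw [← Finset.sum_range_reflect (fun j => σ ^ ((1 - bb) * (((j + 1 : ℕ)) : ℝ))) ℓ]
        apply Finset.sum_congr rfl
        intro j hj
        have : ℓ - j = ℓ - 1 - j + 1 := by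
          have := Finset.mem_range.mp hj; omega
        rw [this]
    _ ≤ C₀ * ∑' j : ℕ, σ ^ ((1 - bb) * (j : ℝ)) := by
        apply mul_le_mul_of_nonneg_left _ hC₀.le
        have h1 : ∑ j ∈ Finset.range ℓ, σ ^ ((1 - bb) * (((j + 1 : ℕ)) : ℝ))
            ≤ ∑ j ∈ Finset.range (ℓ + 1), σ ^ ((1 - bb) * ((j : ℕ) : ℝ)) := by
          rw [Finset.sum_range_succ' (fun j => σ ^ ((1 - bb) * ((j : ℕ) : ℝ))) ℓ]
          have := g_def 0
          push_cast
          push_cast at this ⊢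
          nlinarith [g_def 0]
        exact h1.trans (Summable.sum_le_tsum _ (fun i _ => g_def i) hsum)
end
end

section
/- In the induced Gibbs–Markov setting, assume additionally that: τ(x) ≤ −log dist_δ(x,𝒟) for all x; Σ_{j=0}^{R(x)−1} −log dist_δ(f^j(x),𝒟) ≤ −b R(x) log σ for all x ∈ Δ; there are constants C, c > 0 with Leb({x ∈ Δ : R(x) > n}) ≤ C e^{−cn} for all n ≥ 1; and F has bounded distortion, i.e. |F'(x)|/|F'(y)| ≤ D for all x, y in the same element of 𝒫. Then the induced roof function r(x) = Σ_{j=0}^{R(x)−1} τ(f^j(x)) has exponential tail: there exists ε > 0 such that Σ_{h∈𝓗} e^{ε·sup(r∘h)} sup|h'| < ∞, where 𝓗 is the set of inverse branches of F. -/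
open MeasureTheory Set

noncomputable section

/-- The smooth `δ`-truncated distance to the (finite) set `D`. -/
def distTrunc (δ : ℝ) (D : Set ℝ) (x : ℝ) : ℝ :=
  if Metric.infDist x D ≤ δ then Metric.infDist x D
  else if Metric.infDist x D < 2 * δ then
    ((1 - δ) / δ) * Metric.infDist x D + 2 * δ - 1
  else 1

private lemma ge_on_Icc_of_Ioo {a b c : ℝ} {g : ℝ → ℝ} (hab : a < b)
    (hg : ContinuousOn g (Icc a b)) (hle : ∀ x ∈ Ioo a b, c ≤ g x) :
    ∀ x ∈ Icc a b, c ≤ g x := by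
  intro x hx
  have hx' : x ∈ closure (Ioo a b) := by rwa [closure_Ioo hab.ne]
  have hnb : (nhdsWithin x (Ioo a b)).NeBot := mem_closure_iff_nhdsWithin_neBot.mp hx'
  have ht : Filter.Tendsto g (nhdsWithin x (Ioo a b)) (nhds (g x)) :=
    (hg x hx).mono Ioo_subset_Icc_self
  exact ge_of_tendsto ht (eventually_nhdsWithin_of_forall hle)

private lemma le_on_Icc_of_Ioo {a b c : ℝ} {g : ℝ → ℝ} (hab : a < b)
    (hg : ContinuousOn g (Icc a b)) (hle : ∀ x ∈ Ioo a b, g x ≤ c) :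
    ∀ x ∈ Icc a b, g x ≤ c := by
  intro x hx
  have hx' : x ∈ closure (Ioo a b) := by rwa [closure_Ioo hab.ne]
  have hnb : (nhdsWithin x (Ioo a b)).NeBot := mem_closure_iff_nhdsWithin_neBot.mp hx'
  have ht : Filter.Tendsto g (nhdsWithin x (Ioo a b)) (nhds (g x)) :=
    (hg x hx).mono Ioo_subset_Icc_self
  exact le_of_tendsto ht (eventually_nhdsWithin_of_forall hle)

private lemma exists_ne_ne {p q a1 a2 a3 : ℝ} (h12 : a1 ≠ a2) (h13 : a1 ≠ a3) (h23 : a2 ≠ a3) :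
    (a1 ≠ p ∧ a1 ≠ q) ∨ (a2 ≠ p ∧ a2 ≠ q) ∨ (a3 ≠ p ∧ a3 ≠ q) := by
  rcases eq_or_ne a1 p with rfl | h1p
  · rcases eq_or_ne a2 q with rfl | h2q
    · exact Or.inr (Or.inr ⟨h13.symm, h23.symm⟩)
    · exact Or.inr (Or.inl ⟨h12.symm, h2q⟩)
  · rcases eq_or_ne a1 q with rfl | h1q
    · rcases eq_or_ne a2 p with rfl | h2p
      · exact Or.inr (Or.inr ⟨h23.symm, h13.symm⟩)
      · exact Or.inr (Or.inl ⟨h2p, h12.symm⟩)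
    · exact Or.inl ⟨h1p, h1q⟩

/-- **Exponential tail of the induced roof function** (condition (4) for the
induced semiflow).

In the induced Gibbs–Markov setting, if `τ ≤ -log dist_δ(·,𝒟)`, the Birkhoff sums of
`-log dist_δ(·,𝒟)` up to the inducing time are bounded by `-b R log σ`, the inducing
time `R` has exponential tail with respect to Lebesgue measure, and `F = f^R` has
bounded distortion, then the induced roof function `r = Σ_{j<R} τ∘f^j` has
exponential tail: `Σ_{h∈𝓗} e^{ε sup (r∘h)} sup|h'| < ∞` for some `ε > 0`
(where `sup|h'|` is expressed through `|F'| = Π_{i<R} |f'∘f^i|` along the branch). -/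
theorem induced_roof_function_exponential_tail
    -- the critical set `𝒟 ⊆ I = [0,1]`
    (D : Set ℝ) (hDfin : D.Finite) (hDsub : D ⊆ Icc (0:ℝ) 1)
    (σ bb : ℝ) (hσ : σ ∈ Ioo (0:ℝ) 1) (hb : bb ∈ Ioo (0:ℝ) (1/2))
    -- `f` is `C^1` on `I ∖ 𝒟`
    (f Df : ℝ → ℝ)
    (hf : ∀ x ∈ Icc (0:ℝ) 1 \ D, HasDerivAt f (Df x) x)
    (hfc : ContinuousOn Df (Icc (0:ℝ) 1 \ D))
    (hfmaps : MapsTo f (Icc (0:ℝ) 1 \ D) (Icc (0:ℝ) 1))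
    -- `τ : I ∖ 𝒟 → (0,∞)` is `C^1`
    (τ Dτ : ℝ → ℝ)
    (hτ : ∀ x ∈ Icc (0:ℝ) 1 \ D, HasDerivAt τ (Dτ x) x)
    (hτpos : ∀ x ∈ Icc (0:ℝ) 1 \ D, 0 < τ x)
    -- `Δ = [cΔ, dΔ] ⊆ I` with a countable partition `𝒫` into open intervals
    -- `(cc m, dd m)` (mod Lebesgue-null sets)
    (cΔ dΔ : ℝ) (hΔ : cΔ < dΔ) (hΔsub : Icc cΔ dΔ ⊆ Icc (0:ℝ) 1)
    (cc dd : ℕ → ℝ) (hcd : ∀ m, cc m < dd m)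
    (hcellsub : ∀ m, Ioo (cc m) (dd m) ⊆ Icc cΔ dΔ)
    (hdisj : ∀ m m', m ≠ m' → Disjoint (Ioo (cc m) (dd m)) (Ioo (cc m') (dd m')))
    (hfull : volume (Icc cΔ dΔ \ ⋃ m, Ioo (cc m) (dd m)) = 0)
    -- the inducing time `R`, constant `= Rt m` on each partition element
    (Rt : ℕ → ℕ) (hRt : ∀ m, 1 ≤ Rt m)
    (R : ℝ → ℕ) (hR : ∀ m, ∀ x ∈ Ioo (cc m) (dd m), R x = Rt m)
    -- the full-branch induced map `F = f^R : Δ → Δ` with inverse branches `h m`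
    (F : ℝ → ℝ) (hF : ∀ m, ∀ x ∈ Ioo (cc m) (dd m), F x = f^[Rt m] x)
    (hFmaps : ∀ m, MapsTo F (Ioo (cc m) (dd m)) (Icc cΔ dΔ))
    (h : ℕ → ℝ → ℝ)
    (hcont : ∀ m, ContinuousOn (h m) (Icc cΔ dΔ))
    (himage : ∀ m, h m '' Icc cΔ dΔ = Icc (cc m) (dd m))
    (hinv : ∀ m, ∀ x ∈ Icc cΔ dΔ, F (h m x) = x)
    -- each return time `ℓ = Rt m` is a `(σ,δ)`-hyperbolic time for every point
    -- of the corresponding partition element: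
    -- `|(f^j)'(x)| ≤ σ^{ℓ-j} |F'(x)|` and `dist(f^j x, 𝒟) ≥ σ^{b(ℓ-j)}`, `0 ≤ j < ℓ`
    (hhyp : ∀ m, ∀ x ∈ Ioo (cc m) (dd m), ∀ j < Rt m,
      (∏ i ∈ Finset.range j, |Df (f^[i] x)|)
          ≤ σ ^ (((Rt m : ℝ) - j)) * ∏ i ∈ Finset.range (Rt m), |Df (f^[i] x)| ∧
      σ ^ (bb * ((Rt m : ℝ) - j)) ≤ Metric.infDist (f^[j] x) D)
    (δ : ℝ) (hδ : δ ∈ Ioo (0:ℝ) 1)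
    -- `τ(x) ≤ -log dist_δ(x,𝒟)`
    (hτbound : ∀ x ∈ Icc (0:ℝ) 1 \ D, τ x ≤ -Real.log (distTrunc δ D x))
    -- `Σ_{j<R(x)} -log dist_δ(f^j x, 𝒟) ≤ -b R(x) log σ`
    (hsum : ∀ m, ∀ x ∈ Ioo (cc m) (dd m),
      ∑ j ∈ Finset.range (Rt m), -Real.log (distTrunc δ D (f^[j] x))
        ≤ -(bb * (Rt m : ℝ)) * Real.log σ)
    -- exponential tail of the inducing time `R`
    (Ct ct : ℝ) (hCt : 0 < Ct) (hct : 0 < ct)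
    (htail : ∀ n : ℕ, 1 ≤ n →
      volume {x ∈ Icc cΔ dΔ | n < R x} ≤ ENNReal.ofReal (Ct * Real.exp (-ct * n)))
    -- bounded distortion of `F`
    (Dd : ℝ)
    (hdist : ∀ m, ∀ x ∈ Ioo (cc m) (dd m), ∀ y ∈ Ioo (cc m) (dd m),
      (∏ i ∈ Finset.range (Rt m), |Df (f^[i] x)|)
        ≤ Dd * ∏ i ∈ Finset.range (Rt m), |Df (f^[i] y)|) :
    (∀ m : ℕ, BddAbove
      ((fun x => ∑ j ∈ Finset.range (Rt m), τ (f^[j] (h m x))) '' Icc cΔ dΔ)) ∧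
    ∃ ε > 0, Summable fun m : ℕ =>
      Real.exp (ε * sSup
          ((fun x => ∑ j ∈ Finset.range (Rt m), τ (f^[j] (h m x))) '' Icc cΔ dΔ)) *
        sSup ((fun x => (∏ i ∈ Finset.range (Rt m), |Df (f^[i] (h m x))|)⁻¹)
          '' Icc cΔ dΔ) := by

  classical
  have hσ0 : 0 < σ := hσ.1
  have hσ1 : σ < 1 := hσ.2
  have hb0 : 0 < bb := hb.1
  have hlogneg : Real.log σ < 0 := Real.log_neg hσ0 hσ1
  have hA : 0 < dΔ - cΔ := sub_pos.mpr hΔ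
  have hIccsub : ∀ m, Icc (cc m) (dd m) ⊆ Icc cΔ dΔ := by
    intro m
    rw [← closure_Ioo (hcd m).ne]
    exact closure_minimal (hcellsub m) isClosed_Icc
  have hfC : ContinuousOn f (Icc (0:ℝ) 1 \ D) :=
    fun x hx => (hf x hx).continuousAt.continuousWithinAt
  have hτC : ContinuousOn τ (Icc (0:ℝ) 1 \ D) :=
    fun x hx => (hτ x hx).continuousAt.continuousWithinAt
  -- the iterates map the closed cell into `[0,1] \ D` and are continuous there
  have key : ∀ m, ∀ j, j < Rt m →
      MapsTo (f^[j]) (Icc (cc m) (dd m)) (Icc (0:ℝ) 1 \ D) ∧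
      ContinuousOn (f^[j]) (Icc (cc m) (dd m)) := by
    intro m j
    induction j with
    | zero =>
      intro hj
      have hcont : ContinuousOn (f^[0]) (Icc (cc m) (dd m)) := by
        rw [Function.iterate_zero]; exact continuousOn_id
      refine ⟨?_, hcont⟩
      intro x hx
      have hgc : ContinuousOn (fun y => Metric.infDist (f^[0] y) D) (Icc (cc m) (dd m)) :=
        (Metric.continuous_infDist_pt D).comp_continuousOn hcont
      have hd := ge_on_Icc_of_Ioo (hcd m) hgc (fun y hy => (hhyp m y hy 0 hj).2) x hx
      refine ⟨hΔsub (hIccsub m hx), fun hxD => ?_⟩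
      have hpos : (0:ℝ) < Metric.infDist (f^[0] x) D :=
        lt_of_lt_of_le (Real.rpow_pos_of_pos hσ0 _) hd
      exact absurd (Metric.infDist_zero_of_mem hxD) (ne_of_gt hpos)
    | succ j ih =>
      intro hj
      obtain ⟨hmap, hcnt⟩ := ih (Nat.lt_of_succ_lt hj)
      have hcont : ContinuousOn (f^[j+1]) (Icc (cc m) (dd m)) := by
        rw [Function.iterate_succ']
        exact hfC.comp hcnt hmap
      refine ⟨?_, hcont⟩
      intro x hx
      have hgc : ContinuousOn (fun y => Metric.infDist (f^[j+1] y) D) (Icc (cc m) (dd m)) :=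
        (Metric.continuous_infDist_pt D).comp_continuousOn hcont
      have hd := ge_on_Icc_of_Ioo (hcd m) hgc (fun y hy => (hhyp m y hy (j+1) hj).2) x hx
      have h1 : f^[j+1] x ∈ Icc (0:ℝ) 1 := by
        rw [Function.iterate_succ_apply']
        exact hfmaps (hmap hx)
      refine ⟨h1, fun hxD => ?_⟩
      have hpos : (0:ℝ) < Metric.infDist (f^[j+1] x) D :=
        lt_of_lt_of_le (Real.rpow_pos_of_pos hσ0 _) hd
      exact absurd (Metric.infDist_zero_of_mem hxD) (ne_of_gt hpos)
  -- main per-cell estimates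
  have perm : ∀ m : ℕ,
      (∀ x ∈ Icc (cc m) (dd m),
        (∑ j ∈ Finset.range (Rt m), τ (f^[j] x)) ≤ -(bb * (Rt m : ℝ)) * Real.log σ) ∧
      (∀ x ∈ Icc (cc m) (dd m),
        1 ≤ ∏ i ∈ Finset.range (Rt m), |Df (f^[i] x)|) ∧
      (∀ x ∈ Icc (cc m) (dd m),
        (∏ i ∈ Finset.range (Rt m), |Df (f^[i] x)|)⁻¹ ≤ Dd * (dd m - cc m) / (dΔ - cΔ)) := by
    intro m
    have hcdm := hcd m
    have hlm : 0 < dd m - cc m := sub_pos.mpr hcdm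
    have PC : ContinuousOn (fun x => ∏ i ∈ Finset.range (Rt m), |Df (f^[i] x)|)
        (Icc (cc m) (dd m)) := by
      refine continuousOn_finset_prod _ (fun i hi => ?_)
      have hi' := Finset.mem_range.mp hi
      exact (hfc.comp (key m i hi').2 (key m i hi').1).abs
    have GC : ContinuousOn (fun x => ∑ j ∈ Finset.range (Rt m), τ (f^[j] x))
        (Icc (cc m) (dd m)) := by
      refine continuousOn_finset_sum _ (fun j hj => ?_)
      exact hτC.comp (key m j (Finset.mem_range.mp hj)).2 (key m j (Finset.mem_range.mp hj)).1
    have hG : ∀ x ∈ Icc (cc m) (dd m),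
        (∑ j ∈ Finset.range (Rt m), τ (f^[j] x)) ≤ -(bb * (Rt m : ℝ)) * Real.log σ := by
      refine le_on_Icc_of_Ioo hcdm GC ?_
      intro x hx
      have h1 : (∑ j ∈ Finset.range (Rt m), τ (f^[j] x))
          ≤ ∑ j ∈ Finset.range (Rt m), -Real.log (distTrunc δ D (f^[j] x)) := by
        refine Finset.sum_le_sum (fun j hj => ?_)
        exact hτbound _ ((key m j (Finset.mem_range.mp hj)).1 (Ioo_subset_Icc_self hx))
      exact h1.trans (hsum m x hx)
    have hP1 : ∀ x ∈ Icc (cc m) (dd m), 1 ≤ ∏ i ∈ Finset.range (Rt m), |Df (f^[i] x)| := by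
      refine ge_on_Icc_of_Ioo hcdm PC ?_
      intro x hx
      have h0 := (hhyp m x hx 0 (hRt m)).1
      rw [Finset.prod_range_zero, Nat.cast_zero, sub_zero] at h0
      have hle1 : σ ^ ((Rt m : ℕ) : ℝ) ≤ 1 :=
        Real.rpow_le_one hσ0.le hσ1.le (Nat.cast_nonneg _)
      have hPnn : 0 ≤ ∏ i ∈ Finset.range (Rt m), |Df (f^[i] x)| :=
        Finset.prod_nonneg (fun i _ => abs_nonneg _)
      have h2 := mul_le_mul_of_nonneg_right hle1 hPnn
      rw [one_mul] at h2
      linarith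
    have hmid : (cc m + dd m)/2 ∈ Ioo (cc m) (dd m) := ⟨by linarith, by linarith⟩
    have hDd1 : 1 ≤ Dd := by
      have h1 := hdist m _ hmid _ hmid
      have h2 := hP1 _ (Ioo_subset_Icc_self hmid)
      nlinarith
    have hdistExt : ∀ u ∈ Ioo (cc m) (dd m), ∀ x ∈ Icc (cc m) (dd m),
        (∏ i ∈ Finset.range (Rt m), |Df (f^[i] u)|)
          ≤ Dd * ∏ i ∈ Finset.range (Rt m), |Df (f^[i] x)| := by
      intro u hu
      exact ge_on_Icc_of_Ioo hcdm (continuousOn_const.mul PC) (fun y hy => hdist m u hu y hy)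
    have hMVT : ∀ η, 0 < η → η ≤ dΔ - cΔ → ∃ u ∈ Ioo (cc m) (dd m),
        (dΔ - cΔ - η)/(dd m - cc m) ≤ ∏ i ∈ Finset.range (Rt m), |Df (f^[i] u)| := by
      intro η hη hη'
      by_contra hcon
      push_neg at hcon
      have hderiv : ∀ j, j ≤ Rt m → ∀ u ∈ Ioo (cc m) (dd m),
          HasDerivAt (f^[j]) (∏ i ∈ Finset.range j, Df (f^[i] u)) u := by
        intro j
        induction j with
        | zero =>
          intro _ u _
          simpa using hasDerivAt_id u
        | succ j ih =>
          intro hj u hu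
          have hju := ih (Nat.le_of_succ_le hj) u hu
          have hmem : f^[j] u ∈ Icc (0:ℝ) 1 \ D :=
            (key m j (Nat.lt_of_succ_le hj)).1 (Ioo_subset_Icc_self hu)
          have hcomp := (hf _ hmem).comp u hju
          have heq : f^[j+1] = f ∘ f^[j] := Function.iterate_succ' f j
          have hprod : (∏ i ∈ Finset.range (j+1), Df (f^[i] u))
              = Df (f^[j] u) * ∏ i ∈ Finset.range j, Df (f^[i] u) := by
            rw [Finset.prod_range_succ]; ring
          rw [heq, hprod]
          exact hcomp
      set L : ℝ := (dΔ - cΔ - η)/(dd m - cc m) with hL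
      have hLnn : 0 ≤ L := div_nonneg (by linarith) hlm.le
      have hlip : ∀ u ∈ Ioo (cc m) (dd m), ∀ v ∈ Ioo (cc m) (dd m),
          ‖f^[Rt m] v - f^[Rt m] u‖ ≤ L * ‖v - u‖ := by
        intro u hu v hv
        refine Convex.norm_image_sub_le_of_norm_hasDerivWithin_le
          (fun y hy => (hderiv (Rt m) le_rfl y hy).hasDerivWithinAt)
          (fun y hy => ?_) (convex_Ioo (cc m) (dd m)) hu hv
        rw [Real.norm_eq_abs, Finset.abs_prod]
        exact (hcon y hy).le
      have hpick : ∀ y : ℝ, y ∈ Icc cΔ dΔ → y ≠ F (cc m) → y ≠ F (dd m) →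
          h m y ∈ Ioo (cc m) (dd m) ∧ f^[Rt m] (h m y) = y := by
        intro y hy hyp hyq
        have hmem : h m y ∈ Icc (cc m) (dd m) := by
          rw [← himage m]; exact Set.mem_image_of_mem _ hy
        have hne1 : h m y ≠ cc m := by
          intro hcceq
          have : F (cc m) = y := by rw [← hcceq]; exact hinv m y hy
          exact hyp this.symm
        have hne2 : h m y ≠ dd m := by
          intro hcceq
          have : F (dd m) = y := by rw [← hcceq]; exact hinv m y hy
          exact hyq this.symm
        have hioo : h m y ∈ Ioo (cc m) (dd m) :=
          ⟨lt_of_le_of_ne hmem.1 (Ne.symm hne1), lt_of_le_of_ne hmem.2 hne2⟩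
        exact ⟨hioo, by rw [← hF m _ hioo]; exact hinv m y hy⟩
      have hlo := exists_ne_ne (p := F (cc m)) (q := F (dd m))
        (a1 := cΔ) (a2 := cΔ + η/8) (a3 := cΔ + η/4)
        (ne_of_lt (by linarith)) (ne_of_lt (by linarith)) (ne_of_lt (by linarith))
      have hhi := exists_ne_ne (p := F (cc m)) (q := F (dd m))
        (a1 := dΔ) (a2 := dΔ - η/8) (a3 := dΔ - η/4)
        (ne_of_gt (by linarith)) (ne_of_gt (by linarith)) (ne_of_gt (by linarith))
      have hlo' : ∃ y, y ∈ Icc cΔ dΔ ∧ y ≤ cΔ + η/4 ∧ y ≠ F (cc m) ∧ y ≠ F (dd m) := by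
        rcases hlo with ⟨h1, h2⟩ | ⟨h1, h2⟩ | ⟨h1, h2⟩
        · exact ⟨cΔ, ⟨le_refl _, hΔ.le⟩, by linarith, h1, h2⟩
        · exact ⟨cΔ + η/8, ⟨by linarith, by linarith⟩, by linarith, h1, h2⟩
        · exact ⟨cΔ + η/4, ⟨by linarith, by linarith⟩, le_refl _, h1, h2⟩
      have hhi' : ∃ y, y ∈ Icc cΔ dΔ ∧ dΔ - η/4 ≤ y ∧ y ≠ F (cc m) ∧ y ≠ F (dd m) := by
        rcases hhi with ⟨h1, h2⟩ | ⟨h1, h2⟩ | ⟨h1, h2⟩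
        · exact ⟨dΔ, ⟨hΔ.le, le_refl _⟩, by linarith, h1, h2⟩
        · exact ⟨dΔ - η/8, ⟨by linarith, by linarith⟩, by linarith, h1, h2⟩
        · exact ⟨dΔ - η/4, ⟨by linarith, by linarith⟩, le_refl _, h1, h2⟩
      obtain ⟨ylo, hylo, hylo4, hp1, hp2⟩ := hlo'
      obtain ⟨yhi, hyhi, hyhi4, hq1, hq2⟩ := hhi'
      obtain ⟨huI, hFu⟩ := hpick ylo hylo hp1 hp2
      obtain ⟨hvI, hFv⟩ := hpick yhi hyhi hq1 hq2
      have hlip2 := hlip _ huI _ hvI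
      rw [hFu, hFv, Real.norm_eq_abs, Real.norm_eq_abs] at hlip2
      have habs : |h m yhi - h m ylo| ≤ dd m - cc m := by
        rw [abs_le]
        constructor
        · linarith [huI.1, huI.2, hvI.1, hvI.2]
        · linarith [huI.1, huI.2, hvI.1, hvI.2]
      have h5 : L * |h m yhi - h m ylo| ≤ L * (dd m - cc m) :=
        mul_le_mul_of_nonneg_left habs hLnn
      have h6 : L * (dd m - cc m) = dΔ - cΔ - η := by
        rw [hL]; field_simp
      have h7 : yhi - ylo ≤ |yhi - ylo| := le_abs_self _
      linarith
    have hPinv : ∀ x ∈ Icc (cc m) (dd m),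
        (∏ i ∈ Finset.range (Rt m), |Df (f^[i] x)|)⁻¹ ≤ Dd * (dd m - cc m) / (dΔ - cΔ) := by
      intro x hx
      have hPx1 := hP1 x hx
      have hPx : 0 < ∏ i ∈ Finset.range (Rt m), |Df (f^[i] x)| := lt_of_lt_of_le one_pos hPx1
      have hkey : dΔ - cΔ ≤ Dd * (dd m - cc m) * ∏ i ∈ Finset.range (Rt m), |Df (f^[i] x)| := by
        refine le_of_forall_sub_le (fun η hη => ?_)
        rcases le_or_gt η (dΔ - cΔ) with hle | hgt
        · obtain ⟨u, hu, hPu⟩ := hMVT η hη hle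
          have h1 := hdistExt u hu x hx
          have h2 := (div_le_iff₀ hlm).mp (hPu.trans h1)
          nlinarith
        · nlinarith [mul_pos (mul_pos (lt_of_lt_of_le one_pos hDd1) hlm) hPx]
      have h4 : (∏ i ∈ Finset.range (Rt m), |Df (f^[i] x)|)⁻¹ * (dΔ - cΔ)
          ≤ Dd * (dd m - cc m) := by
        have h5 := mul_le_mul_of_nonneg_left hkey (inv_nonneg.mpr hPx.le)
        calc (∏ i ∈ Finset.range (Rt m), |Df (f^[i] x)|)⁻¹ * (dΔ - cΔ)
            ≤ (∏ i ∈ Finset.range (Rt m), |Df (f^[i] x)|)⁻¹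
              * (Dd * (dd m - cc m) * ∏ i ∈ Finset.range (Rt m), |Df (f^[i] x)|) := h5
          _ = Dd * (dd m - cc m) := by field_simp
      exact (le_div_iff₀ hA).mpr h4
    exact ⟨hG, hP1, hPinv⟩
  -- rewriting the images
  have himgG : ∀ m : ℕ,
      (fun x => ∑ j ∈ Finset.range (Rt m), τ (f^[j] (h m x))) '' Icc cΔ dΔ =
      (fun x => ∑ j ∈ Finset.range (Rt m), τ (f^[j] x)) '' Icc (cc m) (dd m) := by
    intro m
    rw [← himage m, ← Set.image_comp]
    rfl
  have himgP : ∀ m : ℕ,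
      (fun x => (∏ i ∈ Finset.range (Rt m), |Df (f^[i] (h m x))|)⁻¹) '' Icc cΔ dΔ =
      (fun x => (∏ i ∈ Finset.range (Rt m), |Df (f^[i] x)|)⁻¹) '' Icc (cc m) (dd m) := by
    intro m
    rw [← himage m, ← Set.image_comp]
    rfl
  have hbdd : ∀ m : ℕ, BddAbove
      ((fun x => ∑ j ∈ Finset.range (Rt m), τ (f^[j] (h m x))) '' Icc cΔ dΔ) := by
    intro m
    rw [himgG m]
    exact ⟨_, fun z hz => by obtain ⟨x, hx, rfl⟩ := hz; exact (perm m).1 x hx⟩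
  have hSle : ∀ m : ℕ,
      sSup ((fun x => ∑ j ∈ Finset.range (Rt m), τ (f^[j] (h m x))) '' Icc cΔ dΔ)
      ≤ -(bb * (Rt m : ℝ)) * Real.log σ := by
    intro m
    rw [himgG m]
    refine csSup_le ((nonempty_Icc.mpr (hcd m).le).image _) ?_
    rintro z ⟨x, hx, rfl⟩
    exact (perm m).1 x hx
  have hTle : ∀ m : ℕ,
      sSup ((fun x => (∏ i ∈ Finset.range (Rt m), |Df (f^[i] (h m x))|)⁻¹) '' Icc cΔ dΔ)
      ≤ Dd * (dd m - cc m) / (dΔ - cΔ) := by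
    intro m
    rw [himgP m]
    refine csSup_le ((nonempty_Icc.mpr (hcd m).le).image _) ?_
    rintro z ⟨x, hx, rfl⟩
    exact (perm m).2.2 x hx
  have hTnn : ∀ m : ℕ,
      0 ≤ sSup ((fun x => (∏ i ∈ Finset.range (Rt m), |Df (f^[i] (h m x))|)⁻¹) '' Icc cΔ dΔ) := by
    intro m
    rw [himgP m]
    have hbddP : BddAbove
        ((fun x => (∏ i ∈ Finset.range (Rt m), |Df (f^[i] x)|)⁻¹) '' Icc (cc m) (dd m)) :=
      ⟨_, fun z hz => by obtain ⟨x, hx, rfl⟩ := hz; exact (perm m).2.2 x hx⟩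
    have hmem : (∏ i ∈ Finset.range (Rt m), |Df (f^[i] (cc m))|)⁻¹ ∈
        (fun x => (∏ i ∈ Finset.range (Rt m), |Df (f^[i] x)|)⁻¹) '' Icc (cc m) (dd m) :=
      Set.mem_image_of_mem _ (left_mem_Icc.mpr (hcd m).le)
    refine le_trans ?_ (le_csSup hbddP hmem)
    exact inv_nonneg.mpr (Finset.prod_nonneg fun i _ => abs_nonneg _)
  refine ⟨hbdd, ?_⟩
  set ε : ℝ := ct / (2 * (bb * (-Real.log σ))) with hε
  have hεpos : 0 < ε :=
    div_pos hct (mul_pos two_pos (mul_pos hb0 (neg_pos.mpr hlogneg)))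
  refine ⟨ε, hεpos, ?_⟩
  have hεK : ∀ n : ℕ, ε * (-(bb * (n : ℝ)) * Real.log σ) = ct/2 * n := by
    intro n
    rw [hε]
    have h1 : Real.log σ ≠ 0 := ne_of_lt hlogneg
    have h2 : bb ≠ 0 := ne_of_gt hb0
    field_simp
  set u : ℕ → ℝ := fun m => Real.exp (ct/2 * Rt m) * (dd m - cc m) with hu
  have hunn : ∀ m, 0 ≤ u m := fun m =>
    mul_nonneg (Real.exp_nonneg _) (sub_nonneg.mpr (hcd m).le)
  set C2 : ℝ := max (dΔ - cΔ) Ct * Real.exp ct with hC2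
  have hC2nn : 0 ≤ C2 := mul_nonneg (le_trans hA.le (le_max_left _ _)) (Real.exp_nonneg _)
  have hfiber : ∀ n : ℕ, 1 ≤ n → ∀ t : Finset ℕ, (∀ m ∈ t, Rt m = n) →
      ∑ m ∈ t, (dd m - cc m) ≤ C2 * Real.exp (-ct * n) := by
    intro n hn t ht
    have hvol : volume (⋃ m ∈ t, Ioo (cc m) (dd m))
        = ∑ m ∈ t, ENNReal.ofReal (dd m - cc m) := by
      rw [measure_biUnion_finset (fun a _ b _ hab => hdisj a b hab)
        (fun m _ => measurableSet_Ioo)]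
      exact Finset.sum_congr rfl (fun m _ => Real.volume_Ioo)
    have hbound : volume (⋃ m ∈ t, Ioo (cc m) (dd m))
        ≤ ENNReal.ofReal (C2 * Real.exp (-ct * n)) := by
      rcases Nat.lt_or_ge n 2 with h2 | h2
      · have hsubset : (⋃ m ∈ t, Ioo (cc m) (dd m)) ⊆ Icc cΔ dΔ := by
          intro x hx
          simp only [Set.mem_iUnion] at hx
          obtain ⟨m, hm, hxm⟩ := hx
          exact hcellsub m hxm
        refine le_trans (measure_mono hsubset) ?_
        rw [Real.volume_Icc]
        refine ENNReal.ofReal_le_ofReal ?_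
        have hn1 : n = 1 := by omega
        subst hn1
        have harg : ct + -ct * ((1:ℕ) : ℝ) = 0 := by push_cast; ring
        rw [hC2, mul_assoc, ← Real.exp_add, harg, Real.exp_zero, mul_one]
        exact le_max_left _ _
      · have h1n : 1 ≤ n - 1 := by omega
        have hsubset : (⋃ m ∈ t, Ioo (cc m) (dd m)) ⊆ {x ∈ Icc cΔ dΔ | n - 1 < R x} := by
          intro x hx
          simp only [Set.mem_iUnion] at hx
          obtain ⟨m, hm, hxm⟩ := hx
          refine ⟨hcellsub m hxm, ?_⟩
          rw [hR m x hxm, ht m hm]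
          omega
        refine le_trans (measure_mono hsubset)
          (le_trans (htail (n-1) h1n) (ENNReal.ofReal_le_ofReal ?_))
        rw [Nat.cast_sub (by omega : 1 ≤ n), Nat.cast_one]
        have hexp : Real.exp ct * Real.exp (-ct * (n : ℝ)) = Real.exp (-ct * ((n : ℝ) - 1)) := by
          rw [← Real.exp_add]; congr 1; ring
        rw [hC2, mul_assoc, hexp]
        exact mul_le_mul_of_nonneg_right (le_max_right _ _) (Real.exp_nonneg _)
    have hle2 : ENNReal.ofReal (∑ m ∈ t, (dd m - cc m))
        ≤ ENNReal.ofReal (C2 * Real.exp (-ct * n)) := by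
      rw [ENNReal.ofReal_sum_of_nonneg (fun m _ => sub_nonneg.mpr (hcd m).le), ← hvol]
      exact hbound
    exact (ENNReal.ofReal_le_ofReal_iff (mul_nonneg hC2nn (Real.exp_nonneg _))).mp hle2
  have hrlt : Real.exp (-(ct/2)) < 1 := Real.exp_lt_one_iff.mpr (by linarith)
  have hgeo : Summable (fun n : ℕ => Real.exp (-(ct/2)) ^ n) :=
    summable_geometric_of_lt_one (Real.exp_nonneg _) hrlt
  have hpartial : ∀ s : Finset ℕ, ∑ m ∈ s, u m ≤ C2 * (1 - Real.exp (-(ct/2)))⁻¹ := by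
    intro s
    have hmaps : ∀ m ∈ s, Rt m ∈ s.image Rt := fun m hm => Finset.mem_image_of_mem _ hm
    have step1 : ∀ n ∈ s.image Rt,
        (∑ m ∈ s.filter (fun m => Rt m = n), u m) ≤ C2 * Real.exp (-(ct/2)) ^ n := by
      intro n hn
      obtain ⟨m0, hm0, hm0'⟩ := Finset.mem_image.mp hn
      have hn1 : 1 ≤ n := hm0' ▸ hRt m0
      have hsum1 : (∑ m ∈ s.filter (fun m => Rt m = n), u m)
          = Real.exp (ct/2 * n) * ∑ m ∈ s.filter (fun m => Rt m = n), (dd m - cc m) := by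
        rw [Finset.mul_sum]
        refine Finset.sum_congr rfl (fun m hm => ?_)
        simp only [hu]
        rw [(Finset.mem_filter.mp hm).2]
      rw [hsum1]
      have h2 := hfiber n hn1 (s.filter (fun m => Rt m = n))
        (fun m hm => (Finset.mem_filter.mp hm).2)
      calc Real.exp (ct/2 * n) * ∑ m ∈ s.filter (fun m => Rt m = n), (dd m - cc m)
          ≤ Real.exp (ct/2 * n) * (C2 * Real.exp (-ct * n)) :=
            mul_le_mul_of_nonneg_left h2 (Real.exp_nonneg _)
        _ = C2 * (Real.exp (ct/2 * n) * Real.exp (-ct * n)) := by ring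
        _ = C2 * Real.exp ((n : ℝ) * (-(ct/2))) := by
            rw [← Real.exp_add]
            congr 1
            ring
        _ = C2 * Real.exp (-(ct/2)) ^ n := by rw [Real.exp_nat_mul]
    calc (∑ m ∈ s, u m)
        = ∑ n ∈ s.image Rt, ∑ m ∈ s.filter (fun m => Rt m = n), u m :=
          (Finset.sum_fiberwise_of_maps_to hmaps u).symm
      _ ≤ ∑ n ∈ s.image Rt, C2 * Real.exp (-(ct/2)) ^ n := Finset.sum_le_sum step1
      _ = C2 * ∑ n ∈ s.image Rt, Real.exp (-(ct/2)) ^ n := by rw [Finset.mul_sum]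
      _ ≤ C2 * ∑' n : ℕ, Real.exp (-(ct/2)) ^ n := by
          refine mul_le_mul_of_nonneg_left ?_ hC2nn
          exact Summable.sum_le_tsum _ (fun i _ => pow_nonneg (Real.exp_nonneg _) i) hgeo
      _ = C2 * (1 - Real.exp (-(ct/2)))⁻¹ := by
          rw [tsum_geometric_of_lt_one (Real.exp_nonneg _) hrlt]
  have hsumu : Summable u := summable_of_sum_le (Pi.le_def.mpr hunn) hpartial
  refine Summable.of_nonneg_of_le
    (fun m => mul_nonneg (Real.exp_nonneg _) (hTnn m)) (fun m => ?_)
    (hsumu.mul_right (Dd/(dΔ - cΔ)))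
  have h1 : Real.exp (ε * sSup
      ((fun x => ∑ j ∈ Finset.range (Rt m), τ (f^[j] (h m x))) '' Icc cΔ dΔ))
      ≤ Real.exp (ct/2 * (Rt m : ℝ)) := by
    rw [← hεK (Rt m)]
    exact Real.exp_le_exp.mpr (mul_le_mul_of_nonneg_left (hSle m) hεpos.le)
  refine le_trans (mul_le_mul h1 (hTle m) (hTnn m) (Real.exp_nonneg _)) (le_of_eq ?_)
  simp only [hu]
  ring
end
end

section
/- Let F : Δ → Δ be a C^{1+α} uniformly expanding map and r satisfy condition (3). If ψ ∈ C^α_loc(Δ^r) and s = σ + ib with σ ≤ 0, then there exists a constant C > 0 (independent of ψ, s, h) such that ‖ψ_s∘h‖_α ≤ (sup(r∘h) + C)‖ψ‖_α for all h ∈ 𝓗, where ψ_s(x) = ∫_0^{r(x)} e^{su}ψ(x,u) du and ‖ψ_s∘h‖_α = |ψ_s∘h|_∞ + |ψ_s∘h|_α is the C^α norm on Δ. -/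
open MeasureTheory Set

noncomputable section

/-- Data of a full-branch piecewise `C^{1+α}` map of `Δ = [0,1]`, with a countable
partition (mod Lebesgue-null sets) into open intervals `(c m, d m)`, together with
the inverse branches `h m` (one for each partition element) and their derivatives. -/
structure ExpandingData where
  /-- the Hölder exponent `α ∈ (0,1]` -/
  α : ℝ
  αpos : 0 < α
  αle : α ≤ 1
  /-- left endpoints of the partition elements -/
  c : ℕ → ℝ
  /-- right endpoints of the partition elements -/
  d : ℕ → ℝ
  cd : ∀ m, c m < d m
  sub : ∀ m, Ioo (c m) (d m) ⊆ Icc (0:ℝ) 1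
  disj : ∀ m m', m ≠ m' → Disjoint (Ioo (c m) (d m)) (Ioo (c m') (d m'))
  full : volume (Icc (0:ℝ) 1 \ ⋃ m, Ioo (c m) (d m)) = 0
  /-- the map `F` -/
  F : ℝ → ℝ
  Fmeas : Measurable F
  Fmaps : MapsTo F (Icc (0:ℝ) 1) (Icc (0:ℝ) 1)
  /-- the derivative of `F` (on the partition elements) -/
  DF : ℝ → ℝ
  Fderiv : ∀ m, ∀ x ∈ Ioo (c m) (d m), HasDerivAt F (DF x) x
  Fholder : ∀ m, ∃ K, ∀ x ∈ Ioo (c m) (d m), ∀ y ∈ Ioo (c m) (d m),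
      |DF x - DF y| ≤ K * |x - y| ^ α
  /-- full branches: `F(J) = Δ` -/
  Fonto : ∀ m, F '' Ioo (c m) (d m) = Ioo (0:ℝ) 1
  /-- the inverse branch of `F` associated to the `m`-th partition element,
  i.e. the inverse of the homeomorphism `closure (c m, d m) → Δ` extending `F` -/
  h : ℕ → ℝ → ℝ
  /-- the derivative of the inverse branch `h m` -/
  Dh : ℕ → ℝ → ℝ
  hcont : ∀ m, ContinuousOn (h m) (Icc (0:ℝ) 1)
  himage : ∀ m, h m '' Icc (0:ℝ) 1 = Icc (c m) (d m)
  hinv : ∀ m, ∀ x ∈ Icc (0:ℝ) 1, F (h m x) = x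
  hderiv : ∀ m, ∀ x ∈ Icc (0:ℝ) 1, HasDerivWithinAt (h m) (Dh m x) (Icc (0:ℝ) 1) x

namespace ExpandingData

variable (S : ExpandingData)

/-- Composition of inverse branches along a word `w`; for `w` of length `n` this is
an inverse branch of `F^n`, and all elements of `𝓗_n` arise this way. -/
def br : List ℕ → ℝ → ℝ
  | [] => id
  | m :: w => fun x => S.h m (br w x)

/-- The derivative of the composed inverse branch `br w`. -/
def Dbr : List ℕ → ℝ → ℝ
  | [] => fun _ => 1
  | m :: w => fun x => S.Dh m (br S w x) * Dbr w x

/-- Condition (1): `sup |h'| ≤ C₁ ρ^n` for every inverse branch `h ∈ 𝓗_n`, `n ≥ 1`. -/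
def Cond1 (C₁ ρ : ℝ) : Prop :=
  0 < C₁ ∧ ρ ∈ Ioo (0:ℝ) 1 ∧
    ∀ n : ℕ, 1 ≤ n → ∀ w : List ℕ, w.length = n →
      ∀ x ∈ Icc (0:ℝ) 1, |S.Dbr w x| ≤ C₁ * ρ ^ n

/-- Condition (2): the `α`-Hölder seminorm of `log |h'|` is at most `C₂`, `h ∈ 𝓗`. -/
def Cond2 (C₂ : ℝ) : Prop :=
  0 < C₂ ∧ ∀ m, ∀ x ∈ Icc (0:ℝ) 1, ∀ y ∈ Icc (0:ℝ) 1,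
    |Real.log (|S.Dh m x|) - Real.log (|S.Dh m y|)| ≤ C₂ * |x - y| ^ S.α

/-- `sup_Δ |h'|` for the one-step inverse branch `h m ∈ 𝓗`. -/
def DhSup (m : ℕ) : ℝ := sSup ((fun x => |S.Dh m x|) '' Icc (0:ℝ) 1)

end ExpandingData

/-- A roof function `r : Δ → (0,∞)`, `C^1` on the partition elements,
bounded away from zero. -/
structure RoofData (S : ExpandingData) where
  /-- the roof function -/
  r : ℝ → ℝ
  rmeas : Measurable r
  rpos : ∃ r₀ > 0, ∀ x ∈ Icc (0:ℝ) 1, r₀ ≤ r x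
  /-- the derivative of `r` (on the partition elements) -/
  Dr : ℝ → ℝ
  rderiv : ∀ m, ∀ x ∈ Ioo (S.c m) (S.d m), HasDerivAt r (Dr x) x

variable {S : ExpandingData}

/-- `sup_Δ (r ∘ h)` for the one-step inverse branch `h m ∈ 𝓗`. -/
def rhSup (R : RoofData S) (m : ℕ) : ℝ :=
  sSup ((fun x => R.r (S.h m x)) '' Icc (0:ℝ) 1)

/-- Condition (3): `sup |(r ∘ h)'| ≤ C₃` for all `h ∈ 𝓗`. -/
def Cond3 (R : RoofData S) (C₃ : ℝ) : Prop :=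
  0 < C₃ ∧ ∀ m, ∀ x ∈ Icc (0:ℝ) 1, |R.Dr (S.h m x) * S.Dh m x| ≤ C₃

/-- Condition (4): exponential tail,
`Σ_{h ∈ 𝓗} e^{ε sup (r∘h)} sup|h'| < ∞` for some `ε > 0`. -/
def Cond4 (R : RoofData S) : Prop :=
  (∀ m, BddAbove ((fun x => R.r (S.h m x)) '' Icc (0:ℝ) 1)) ∧
    ∃ ε > 0, Summable fun m => Real.exp (ε * rhSup R m) * S.DhSup m

/-- Condition (5) (UNI): `r` is not cohomologous to a function constant on the
partition elements, via a `C^1` transfer function. -/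
def Cond5 (R : RoofData S) : Prop :=
  ¬ ∃ ψ φ Dφ : ℝ → ℝ,
      (∀ m, ∃ k, ∀ x ∈ Ioo (S.c m) (S.d m), ψ x = k) ∧
      (∀ x ∈ Icc (0:ℝ) 1, HasDerivWithinAt φ (Dφ x) (Icc (0:ℝ) 1) x) ∧
      ContinuousOn Dφ (Icc (0:ℝ) 1) ∧
      ∀ m, ∀ x ∈ Ioo (S.c m) (S.d m), R.r x = ψ x + φ (S.F x) - φ x

/-- The suspension space `Δ^r = {(x,u) : x ∈ Δ, 0 ≤ u ≤ r x}`
(a fundamental domain for the quotient by `(x, r x) ∼ (F x, 0)`). -/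
def SuspSet (R : RoofData S) : Set (ℝ × ℝ) :=
  {p | p.1 ∈ Icc (0:ℝ) 1 ∧ 0 ≤ p.2 ∧ p.2 ≤ R.r p.1}

/-- Birkhoff sums `r_n = Σ_{j<n} r ∘ F^j` of the roof function. -/
def birkhoff (R : RoofData S) (n : ℕ) (x : ℝ) : ℝ :=
  ∑ j ∈ Finset.range n, R.r (S.F^[j] x)

/-- `Φ` is the suspension semiflow `F_t(x,u) = (x, u+t)` computed modulo the
identifications `(x, r x) ∼ (F x, 0)`. -/
def IsSuspensionSemiflow (R : RoofData S) (Φ : ℝ → ℝ × ℝ → ℝ × ℝ) : Prop :=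
  ∀ t, 0 ≤ t → ∀ x ∈ Icc (0:ℝ) 1, ∀ u, 0 ≤ u → u ≤ R.r x → ∀ n : ℕ,
    birkhoff R n x ≤ u + t → u + t < birkhoff R (n + 1) x →
      Φ t (x, u) = (S.F^[n] x, u + t - birkhoff R n x)

/-- The suspension of the measure `μF`: `μ_F^r = (μ_F × Leb)|_{Δ^r} / ∫ r dμ_F`. -/
def suspMeasure (R : RoofData S) (μF : Measure ℝ) : Measure (ℝ × ℝ) :=
  (ENNReal.ofReal (∫ x, R.r x ∂μF))⁻¹ • ((μF.prod volume).restrict (SuspSet R))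

/-- The set of values `|f p|`, `p ∈ Δ^r`. -/
def suspSupSet (R : RoofData S) (f : ℝ × ℝ → ℝ) : Set ℝ :=
  (fun p => |f p|) '' SuspSet R

/-- The sup norm `|f|_∞` over `Δ^r`. -/
def suspSup (R : RoofData S) (f : ℝ × ℝ → ℝ) : ℝ := sSup (suspSupSet R f)

/-- The set of local Hölder quotients of `f` over `Δ^r`. -/
def suspHolSet (R : RoofData S) (f : ℝ × ℝ → ℝ) : Set ℝ :=
  {y | ∃ m : ℕ, ∃ x₁ ∈ Icc (0:ℝ) 1, ∃ x₂ ∈ Icc (0:ℝ) 1, x₁ ≠ x₂ ∧ ∃ u : ℝ,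
      (S.h m x₁, u) ∈ SuspSet R ∧ (S.h m x₂, u) ∈ SuspSet R ∧
      y = |f (S.h m x₁, u) - f (S.h m x₂, u)| / |x₁ - x₂| ^ S.α}

/-- The local Hölder seminorm `|f|_{α,loc}` on `Δ^r`. -/
def suspHol (R : RoofData S) (f : ℝ × ℝ → ℝ) : ℝ := sSup (suspHolSet R f)

/-- The norm `‖f‖_α = |f|_∞ + |f|_{α,loc}` on `C^α_loc(Δ^r)`. -/
def suspCα (R : RoofData S) (f : ℝ × ℝ → ℝ) : ℝ := suspSup R f + suspHol R f

/-- Differentiation along the semiflow direction. -/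
def dtDeriv (f : ℝ × ℝ → ℝ) : ℝ × ℝ → ℝ := fun p => deriv (fun v => f (p.1, v)) p.2

/-- The norm `‖f‖_{α,2} = Σ_{j≤2} ‖∂_t^j f‖_α` on `C^{α,2}_loc(Δ^r)`. -/
def suspCα2 (R : RoofData S) (f : ℝ × ℝ → ℝ) : ℝ :=
  ∑ j ∈ Finset.range 3, suspCα R (dtDeriv^[j] f)

/-- Membership in `C^α_loc(Δ^r)` (with measurability, as part of being in `L^∞`). -/
def MemSuspCα (R : RoofData S) (f : ℝ × ℝ → ℝ) : Prop :=
  Measurable f ∧ BddAbove (suspSupSet R f) ∧ BddAbove (suspHolSet R f)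

/-- Membership in `C^{α,2}_loc(Δ^r)`. -/
def MemSuspCα2 (R : RoofData S) (f : ℝ × ℝ → ℝ) : Prop :=
  Measurable f ∧ ∀ j ≤ 2,
    BddAbove (suspSupSet R (dtDeriv^[j] f)) ∧ BddAbove (suspHolSet R (dtDeriv^[j] f))

/-- `φ_s(x) = ∫_0^{r(x)} e^{-su} φ(x,u) du`. -/
def phiS (R : RoofData S) (φ : ℝ × ℝ → ℝ) (s : ℂ) (x : ℝ) : ℂ :=
  ∫ u in (0:ℝ)..(R.r x), Complex.exp (-s * u) * (φ (x, u) : ℂ)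

/-- `ψ_s(x) = ∫_0^{r(x)} e^{su} ψ(x,u) du`. -/
def psiS (R : RoofData S) (ψ : ℝ × ℝ → ℝ) (s : ℂ) (x : ℝ) : ℂ :=
  ∫ u in (0:ℝ)..(R.r x), Complex.exp (s * u) * (ψ (x, u) : ℂ)

/-- `Ĵ_n(s) = (∫ r dμ_F)⁻¹ ∫_Δ (φ_s ∘ F^n) e^{-s r_n} ψ_s dμ_F`. -/
def Jhat (R : RoofData S) (μF : Measure ℝ) (φ ψ : ℝ × ℝ → ℝ) (n : ℕ) (s : ℂ) : ℂ :=
  ((∫ x, R.r x ∂μF : ℝ) : ℂ)⁻¹ *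
    ∫ x, phiS R φ s (S.F^[n] x) * Complex.exp (-s * (birkhoff R n x : ℝ)) *
      psiS R ψ s x ∂μF
/-- The set of values `‖g x‖`, `x ∈ Δ`, for a complex-valued function on `Δ`. -/
def cSupSet (g : ℝ → ℂ) : Set ℝ := (fun x => ‖g x‖) '' Icc (0:ℝ) 1

/-- The sup norm `|g|_∞` over `Δ`. -/
def cSup (g : ℝ → ℂ) : ℝ := sSup (cSupSet g)

/-- The set of `α`-Hölder quotients of `g` over `Δ`. -/
def cHolSet (αe : ℝ) (g : ℝ → ℂ) : Set ℝ :=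
  {y | ∃ x ∈ Icc (0:ℝ) 1, ∃ z ∈ Icc (0:ℝ) 1, x ≠ z ∧ y = ‖g x - g z‖ / |x - z| ^ αe}

/-- The `α`-Hölder seminorm `|g|_α` over `Δ`. -/
def cHol (αe : ℝ) (g : ℝ → ℂ) : ℝ := sSup (cHolSet αe g)

/-- The `C^α(Δ)` norm `‖g‖_α = |g|_∞ + |g|_α`. -/
def cNorm (αe : ℝ) (g : ℝ → ℂ) : ℝ := cSup g + cHol αe g

variable (S) in
/-- The set of local Hölder quotients of `g` (through inverse branches `h ∈ 𝓗`). -/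
def cHolLocSet (g : ℝ → ℂ) : Set ℝ :=
  {y | ∃ m : ℕ, ∃ x ∈ Icc (0:ℝ) 1, ∃ z ∈ Icc (0:ℝ) 1, x ≠ z ∧
      y = ‖g (S.h m x) - g (S.h m z)‖ / |x - z| ^ S.α}

variable (S) in
/-- The local Hölder seminorm `|g|_{α,loc}` on `Δ`. -/
def cHolLoc (g : ℝ → ℂ) : ℝ := sSup (cHolLocSet S g)

variable (S) in
/-- The equivalent norms `‖g‖_b = max{|g|_∞, |g|_{α,loc}/(1+|b|^α)}`. -/
def bNorm (b : ℝ) (g : ℝ → ℂ) : ℝ := max (cSup g) (cHolLoc S g / (1 + |b| ^ S.α))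

variable (S) in
/-- Membership in `C^α_loc(Δ)`. -/
def MemCαLoc (g : ℝ → ℂ) : Prop := BddAbove (cSupSet g) ∧ BddAbove (cHolLocSet S g)

variable (S) in
/-- Membership in `C^α(Δ)`. -/
def MemCα (g : ℝ → ℂ) : Prop := BddAbove (cSupSet g) ∧ BddAbove (cHolSet S.α g)

/-!
For `x, z ∈ (0,1)` write `a = r (h x)`, `b = r (h z)`. Then `ψ_s (h x) - ψ_s (h z)` is the
integral over `[0, min a b]` of `e^{su} (ψ (h x, u) - ψ (h z, u))`, which is at most
`sup (r ∘ h) |ψ|_{α,loc} |x - z|^α` because `|e^{su}| ≤ 1` for `Re s ≤ 0`, plus an integral over an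
interval of length `|a - b| ≤ C₃ |x - z| ≤ C₃ |x - z|^α` (condition (3) and the mean value
theorem), which is at most `C₃ |ψ|_∞ |x - z|^α`. Together with `|ψ_s ∘ h|_∞ ≤ sup (r ∘ h) |ψ|_∞`
this gives the estimate with `C = C₃`.
-/

open Filter Topology

theorem continuousOn_of_norm_sub_le_mul_rpow {E : Type*} [SeminormedAddCommGroup E]
    {G : ℝ → E} {s : Set ℝ} {α B : ℝ} (hα : 0 < α)
    (hG : ∀ x ∈ s, ∀ z ∈ s, ‖G x - G z‖ ≤ B * |x - z| ^ α) : ContinuousOn G s := by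
  intro x hx
  have hlim : Tendsto (fun z => B * |z - x| ^ α) (𝓝[s] x) (𝓝 0) := by
    have : ContinuousAt (fun z => B * |z - x| ^ α) x := by
      apply ContinuousAt.mul continuousAt_const
      exact (continuous_abs.comp (continuous_id.sub continuous_const)).continuousAt.rpow_const
        (Or.inr hα.le)
    simpa [hα.ne'] using this.tendsto.mono_left nhdsWithin_le_nhds
  refine tendsto_iff_norm_sub_tendsto_zero.2
    (squeeze_zero' (Eventually.of_forall fun _ => norm_nonneg _) ?_ hlim)
  filter_upwards [self_mem_nhdsWithin] with z hz using hG z hz x hx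

theorem norm_sub_le_mul_rpow_of_forall_Ioo {E : Type*} [SeminormedAddCommGroup E]
    {G : ℝ → E} {a b α A : ℝ} (hab : a < b) (hα : 0 < α) (hG : ContinuousOn G (Icc a b))
    (hA : ∀ x ∈ Ioo a b, ∀ z ∈ Ioo a b, ‖G x - G z‖ ≤ A * |x - z| ^ α) :
    ∀ x ∈ Icc a b, ∀ z ∈ Icc a b, ‖G x - G z‖ ≤ A * |x - z| ^ α := by
  set Φ : ℝ × ℝ → ℝ := fun p => ‖G p.1 - G p.2‖ - A * |p.1 - p.2| ^ α
  have hΦ : ContinuousOn Φ (Icc a b ×ˢ Icc a b) := by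
    refine ContinuousOn.sub ?_ ?_
    · exact ((hG.comp continuousOn_fst fun p hp => hp.1).sub
        (hG.comp continuousOn_snd fun p hp => hp.2)).norm
    · exact (continuous_const.mul
        ((continuous_abs.comp (continuous_fst.sub continuous_snd)).rpow_const
          fun _ => Or.inr hα.le)).continuousOn
  have hclosed := hΦ.preimage_isClosed_of_isClosed (isClosed_Icc.prod isClosed_Icc)
    (isClosed_Iic (a := (0:ℝ)))
  have hsub : Ioo a b ×ˢ Ioo a b ⊆ Icc a b ×ˢ Icc a b ∩ Φ ⁻¹' Iic 0 := fun p hp =>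
    ⟨⟨Ioo_subset_Icc_self hp.1, Ioo_subset_Icc_self hp.2⟩, sub_nonpos.2 (hA _ hp.1 _ hp.2)⟩
  have hcl := closure_minimal hsub hclosed
  rw [closure_prod_eq, closure_Ioo hab.ne] at hcl
  intro x hx z hz
  exact sub_nonpos.1 (hcl (a := (x, z)) ⟨hx, hz⟩).2

theorem norm_integral_sub_integral_le {E : Type*} [NormedAddCommGroup E] [NormedSpace ℝ E]
    {f g : ℝ → E} {a b M δ : ℝ} (ha : 0 ≤ a) (hb : 0 ≤ b)
    (hf : IntervalIntegrable f volume 0 a) (hg : IntervalIntegrable g volume 0 b)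
    (hfM : ∀ u ∈ Ioc 0 a, ‖f u‖ ≤ M) (hgM : ∀ u ∈ Ioc 0 b, ‖g u‖ ≤ M)
    (hfg : ∀ u ∈ Ioc 0 (min a b), ‖f u - g u‖ ≤ δ) :
    ‖(∫ u in 0..a, f u) - ∫ u in 0..b, g u‖ ≤ δ * min a b + M * |a - b| := by
  set c := min a b
  have hc : 0 ≤ c := le_min ha hb
  have hca : c ∈ uIcc 0 a := by rw [uIcc_of_le ha]; exact ⟨hc, min_le_left a b⟩
  have hcb : c ∈ uIcc 0 b := by rw [uIcc_of_le hb]; exact ⟨hc, min_le_right a b⟩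
  have hf₀ : IntervalIntegrable f volume 0 c := hf.mono_set (uIcc_subset_uIcc left_mem_uIcc hca)
  have hg₀ : IntervalIntegrable g volume 0 c := hg.mono_set (uIcc_subset_uIcc left_mem_uIcc hcb)
  have hf₁ : IntervalIntegrable f volume c a := hf.mono_set (uIcc_subset_uIcc hca right_mem_uIcc)
  have hg₁ : IntervalIntegrable g volume c b := hg.mono_set (uIcc_subset_uIcc hcb right_mem_uIcc)
  have hsplit : (∫ u in 0..a, f u) - ∫ u in 0..b, g u
      = (∫ u in 0..c, f u - g u) + ((∫ u in c..a, f u) - ∫ u in c..b, g u) := by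
    rw [← intervalIntegral.integral_add_adjacent_intervals hf₀ hf₁,
      ← intervalIntegral.integral_add_adjacent_intervals hg₀ hg₁,
      intervalIntegral.integral_sub hf₀ hg₀]
    abel
  have hcommon : ‖∫ u in 0..c, f u - g u‖ ≤ δ * |c - 0| :=
    intervalIntegral.norm_integral_le_of_norm_le_const fun u hu =>
      hfg u (by rwa [uIoc_of_le hc] at hu)
  have htail_f : ‖∫ u in c..a, f u‖ ≤ M * |a - c| :=
    intervalIntegral.norm_integral_le_of_norm_le_const fun u hu => hfM u <| by
      rw [uIoc_of_le (min_le_left a b)] at hu; exact ⟨hc.trans_lt hu.1, hu.2⟩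
  have htail_g : ‖∫ u in c..b, g u‖ ≤ M * |b - c| :=
    intervalIntegral.norm_integral_le_of_norm_le_const fun u hu => hgM u <| by
      rw [uIoc_of_le (min_le_right a b)] at hu; exact ⟨hc.trans_lt hu.1, hu.2⟩
  have hlen : |a - c| + |b - c| = |a - b| := by
    rcases le_total a b with h | h
    · simp only [c, min_eq_left h, sub_self, abs_zero, abs_sub_comm a b, zero_add]
    · simp only [c, min_eq_right h, sub_self, abs_zero, add_zero]
  calc _ ≤ ‖∫ u in 0..c, f u - g u‖ + (‖∫ u in c..a, f u‖ + ‖∫ u in c..b, g u‖) := by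
        rw [hsplit]; exact (norm_add_le _ _).trans (add_le_add_right (norm_sub_le _ _) _)
    _ ≤ δ * |c - 0| + (M * |a - c| + M * |b - c|) := by gcongr
    _ = δ * c + M * |a - b| := by rw [sub_zero, abs_of_nonneg hc, ← hlen]; ring

theorem norm_cexp_mul_ofReal_le_one {s : ℂ} (hs : s.re ≤ 0) {u : ℝ} (hu : 0 ≤ u) :
    ‖Complex.exp (s * u)‖ ≤ 1 := by
  rw [Complex.norm_exp, Complex.re_mul_ofReal]
  exact Real.exp_le_one_iff.2 (mul_nonpos_of_nonpos_of_nonneg hs hu)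

/-- If the Hölder quotients of `g` are unbounded, `cHol α g` is the junk value `0`; otherwise
`g` is Hölder, hence continuous, on `[0,1]` and the interior bound extends to the endpoints. -/
theorem cHol_le_of_forall_Ioo {g : ℝ → ℂ} {α A : ℝ} (hα : 0 < α) (hA : 0 ≤ A)
    (hg : ∀ x ∈ Ioo (0:ℝ) 1, ∀ z ∈ Ioo (0:ℝ) 1, ‖g x - g z‖ ≤ A * |x - z| ^ α) :
    cHol α g ≤ A := by
  by_cases hbdd : BddAbove (cHolSet α g)
  swap
  · rw [cHol, Real.sSup_of_not_bddAbove hbdd]; exact hA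
  obtain ⟨B, hB⟩ := hbdd
  have hholder : ∀ x ∈ Icc (0:ℝ) 1, ∀ z ∈ Icc (0:ℝ) 1, ‖g x - g z‖ ≤ B * |x - z| ^ α := by
    intro x hx z hz
    rcases eq_or_ne x z with rfl | hxz
    · simp [Real.zero_rpow hα.ne']
    · exact (div_le_iff₀ (by positivity)).1 (hB ⟨x, hx, z, hz, hxz, rfl⟩)
  have hcont := continuousOn_of_norm_sub_le_mul_rpow hα hholder
  have hext := norm_sub_le_mul_rpow_of_forall_Ioo zero_lt_one hα hcont hg
  refine Real.sSup_le ?_ hA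
  rintro _ ⟨x, hx, z, hz, hxz, rfl⟩
  exact (div_le_iff₀ (by positivity)).2 (hext x hx z hz)

namespace ExpandingData

theorem h_mem_Icc (S : ExpandingData) (m : ℕ) {x : ℝ} (hx : x ∈ Icc (0:ℝ) 1) :
    S.h m x ∈ Icc (0:ℝ) 1 := by
  have hsub : Icc (S.c m) (S.d m) ⊆ Icc (0:ℝ) 1 := by
    rw [← closure_Ioo (S.cd m).ne]
    exact closure_minimal (S.sub m) isClosed_Icc
  exact hsub (S.himage m ▸ mem_image_of_mem _ hx)

theorem h_mem_Ioo (S : ExpandingData) (m : ℕ) {x : ℝ} (hx : x ∈ Ioo (0:ℝ) 1) :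
    S.h m x ∈ Ioo (S.c m) (S.d m) := by
  obtain ⟨y, hy, rfl⟩ : x ∈ S.F '' Ioo (S.c m) (S.d m) := S.Fonto m ▸ hx
  obtain ⟨x', hx', hhx'⟩ : y ∈ S.h m '' Icc (0:ℝ) 1 := S.himage m ▸ Ioo_subset_Icc_self hy
  rwa [← hhx', S.hinv m x' hx', hhx']

end ExpandingData

theorem Cond3.abs_sub_le {R : RoofData S} {C₃ : ℝ} (h3 : Cond3 R C₃) (m : ℕ)
    {x z : ℝ} (hx : x ∈ Ioo (0:ℝ) 1) (hz : z ∈ Ioo (0:ℝ) 1) :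
    |R.r (S.h m x) - R.r (S.h m z)| ≤ C₃ * |x - z| := by
  have hderiv : ∀ y ∈ Ioo (0:ℝ) 1, HasDerivWithinAt (fun t => R.r (S.h m t))
      (R.Dr (S.h m y) * S.Dh m y) (Ioo (0:ℝ) 1) y := fun y hy =>
    (R.rderiv m _ (S.h_mem_Ioo m hy)).comp_hasDerivWithinAt y
      ((S.hderiv m y (Ioo_subset_Icc_self hy)).mono Ioo_subset_Icc_self)
  simpa only [Real.norm_eq_abs] using Convex.norm_image_sub_le_of_norm_hasDerivWithin_le hderiv
    (fun y hy => h3.2 m y (Ioo_subset_Icc_self hy)) (convex_Ioo 0 1) hz hx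

theorem Cond3.bddAbove_r_comp_h {R : RoofData S} {C₃ : ℝ} (h3 : Cond3 R C₃) (m : ℕ) :
    BddAbove ((fun x => R.r (S.h m x)) '' Icc (0:ℝ) 1) := by
  refine ⟨max (max (R.r (S.h m 0)) (R.r (S.h m 1))) (R.r (S.h m (1/2)) + C₃), ?_⟩
  rintro _ ⟨x, hx, rfl⟩
  rcases hx.1.eq_or_lt with rfl | hx₀
  · exact le_max_of_le_left (le_max_left _ _)
  rcases hx.2.eq_or_lt with rfl | hx₁
  · exact le_max_of_le_left (le_max_right _ _)
  have hhalf : (1/2 : ℝ) ∈ Ioo (0:ℝ) 1 := by norm_num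
  have hdist : |x - 1/2| ≤ 1 := abs_le.2 ⟨by linarith, by linarith⟩
  have := (abs_sub_le_iff.1 ((h3.abs_sub_le m ⟨hx₀, hx₁⟩ hhalf).trans
    (mul_le_of_le_one_right h3.1.le hdist))).1
  exact le_max_of_le_right (by linarith)

theorem RoofData.r_pos (R : RoofData S) {p : ℝ} (hp : p ∈ Icc (0:ℝ) 1) : 0 < R.r p := by
  obtain ⟨r₀, hr₀, hr⟩ := R.rpos
  exact hr₀.trans_le (hr p hp)

theorem Cond3.r_comp_h_le_rhSup {R : RoofData S} {C₃ : ℝ} (h3 : Cond3 R C₃) (m : ℕ) {x : ℝ}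
    (hx : x ∈ Icc (0:ℝ) 1) : R.r (S.h m x) ≤ rhSup R m :=
  le_csSup (h3.bddAbove_r_comp_h m) ⟨x, hx, rfl⟩

theorem Cond3.rhSup_nonneg {R : RoofData S} {C₃ : ℝ} (h3 : Cond3 R C₃) (m : ℕ) :
    0 ≤ rhSup R m :=
  (R.r_pos (S.h_mem_Icc m (left_mem_Icc.2 zero_le_one))).le.trans
    (h3.r_comp_h_le_rhSup m (left_mem_Icc.2 zero_le_one))

section SuspensionNorms

variable {R : RoofData S} {ψ : ℝ × ℝ → ℝ}

theorem suspSup_nonneg : 0 ≤ suspSup R ψ :=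
  Real.sSup_nonneg <| by rintro _ ⟨p, -, rfl⟩; exact abs_nonneg _

theorem suspHol_nonneg : 0 ≤ suspHol R ψ :=
  Real.sSup_nonneg <| by rintro _ ⟨m, x₁, -, x₂, -, -, u, -, -, rfl⟩; positivity

theorem abs_le_suspSup (hb : BddAbove (suspSupSet R ψ)) {p : ℝ × ℝ} (hp : p ∈ SuspSet R) :
    |ψ p| ≤ suspSup R ψ :=
  le_csSup hb ⟨p, hp, rfl⟩

theorem abs_sub_le_suspHol (hb : BddAbove (suspHolSet R ψ)) (m : ℕ) {x₁ x₂ u : ℝ}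
    (hx₁ : x₁ ∈ Icc (0:ℝ) 1) (hx₂ : x₂ ∈ Icc (0:ℝ) 1)
    (h₁ : (S.h m x₁, u) ∈ SuspSet R) (h₂ : (S.h m x₂, u) ∈ SuspSet R) :
    |ψ (S.h m x₁, u) - ψ (S.h m x₂, u)| ≤ suspHol R ψ * |x₁ - x₂| ^ S.α := by
  rcases eq_or_ne x₁ x₂ with rfl | hne
  · simp [Real.zero_rpow S.αpos.ne']
  · exact (div_le_iff₀ (by positivity)).1 (le_csSup hb ⟨m, x₁, hx₁, x₂, hx₂, hne, u, h₁, h₂, rfl⟩)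

theorem norm_psiS_integrand_le (hb : BddAbove (suspSupSet R ψ)) {s : ℂ} (hs : s.re ≤ 0)
    {p u : ℝ} (hpu : (p, u) ∈ SuspSet R) :
    ‖Complex.exp (s * u) * (ψ (p, u) : ℂ)‖ ≤ suspSup R ψ := by
  rw [norm_mul, Complex.norm_real, Real.norm_eq_abs]
  calc _ ≤ 1 * suspSup R ψ := mul_le_mul (norm_cexp_mul_ofReal_le_one hs hpu.2.1)
        (abs_le_suspSup hb hpu) (abs_nonneg _) zero_le_one
    _ = suspSup R ψ := one_mul _

theorem intervalIntegrable_psiS_integrand (hψ : MemSuspCα R ψ) {s : ℂ} (hs : s.re ≤ 0)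
    {p : ℝ} (hp : p ∈ Icc (0:ℝ) 1) :
    IntervalIntegrable (fun u : ℝ => Complex.exp (s * u) * (ψ (p, u) : ℂ)) volume 0 (R.r p) := by
  rw [intervalIntegrable_iff_integrableOn_Ioc_of_le (R.r_pos hp).le]
  refine Measure.integrableOn_of_bounded (M := suspSup R ψ) measure_Ioc_lt_top.ne ?_ ?_
  · exact (by fun_prop : Measurable fun u : ℝ => Complex.exp (s * u)).mul
      (Complex.measurable_ofReal.comp (hψ.1.comp measurable_prodMk_left)) |>.aestronglyMeasurable
  · filter_upwards [ae_restrict_mem measurableSet_Ioc] with u hu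
    exact norm_psiS_integrand_le hψ.2.1 hs ⟨hp, hu.1.le, hu.2⟩

theorem norm_psiS_le (hb : BddAbove (suspSupSet R ψ)) {s : ℂ} (hs : s.re ≤ 0) {p : ℝ}
    (hp : p ∈ Icc (0:ℝ) 1) : ‖psiS R ψ s p‖ ≤ suspSup R ψ * R.r p := by
  have hr := (R.r_pos hp).le
  have := intervalIntegral.norm_integral_le_of_norm_le_const fun u hu =>
    norm_psiS_integrand_le hb hs (by rw [uIoc_of_le hr] at hu; exact ⟨hp, hu.1.le, hu.2⟩)
  rwa [sub_zero, abs_of_nonneg hr] at this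

end SuspensionNorms

section BranchEstimate

variable {R : RoofData S} {C₃ : ℝ} {ψ : ℝ × ℝ → ℝ} {s : ℂ}

theorem norm_psiS_comp_h_sub_le (h3 : Cond3 R C₃) (hψ : MemSuspCα R ψ) (hs : s.re ≤ 0)
    (m : ℕ) {x z : ℝ} (hx : x ∈ Ioo (0:ℝ) 1) (hz : z ∈ Ioo (0:ℝ) 1) :
    ‖psiS R ψ s (S.h m x) - psiS R ψ s (S.h m z)‖
      ≤ (rhSup R m * suspHol R ψ + C₃ * suspSup R ψ) * |x - z| ^ S.α := by
  have hx' := Ioo_subset_Icc_self hx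
  have hz' := Ioo_subset_Icc_self hz
  have hp := S.h_mem_Icc m hx'
  have hq := S.h_mem_Icc m hz'
  have hcommon : ∀ u ∈ Ioc 0 (min (R.r (S.h m x)) (R.r (S.h m z))),
      ‖Complex.exp (s * u) * (ψ (S.h m x, u) : ℂ) - Complex.exp (s * u) * (ψ (S.h m z, u) : ℂ)‖
        ≤ suspHol R ψ * |x - z| ^ S.α := by
    intro u hu
    rw [← mul_sub, norm_mul, ← Complex.ofReal_sub, Complex.norm_real, Real.norm_eq_abs]
    calc _ ≤ 1 * (suspHol R ψ * |x - z| ^ S.α) :=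
          mul_le_mul (norm_cexp_mul_ofReal_le_one hs hu.1.le)
            (abs_sub_le_suspHol hψ.2.2 m hx' hz' ⟨hp, hu.1.le, hu.2.trans (min_le_left _ _)⟩
              ⟨hq, hu.1.le, hu.2.trans (min_le_right _ _)⟩) (abs_nonneg _) zero_le_one
      _ = suspHol R ψ * |x - z| ^ S.α := one_mul _
  have hsplit := norm_integral_sub_integral_le (R.r_pos hp).le (R.r_pos hq).le
    (intervalIntegrable_psiS_integrand hψ hs hp) (intervalIntegrable_psiS_integrand hψ hs hq)
    (fun u hu => norm_psiS_integrand_le hψ.2.1 hs ⟨hp, hu.1.le, hu.2⟩)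
    (fun u hu => norm_psiS_integrand_le hψ.2.1 hs ⟨hq, hu.1.le, hu.2⟩) hcommon
  have hmin : min (R.r (S.h m x)) (R.r (S.h m z)) ≤ rhSup R m :=
    (min_le_left _ _).trans (h3.r_comp_h_le_rhSup m hx')
  have hdist : |x - z| ≤ |x - z| ^ S.α :=
    Real.self_le_rpow_of_le_one (abs_nonneg _)
      (abs_le.2 ⟨by linarith [hx.1, hz.2], by linarith [hx.2, hz.1]⟩) S.αle
  have hroof : |R.r (S.h m x) - R.r (S.h m z)| ≤ C₃ * |x - z| ^ S.α :=
    (h3.abs_sub_le m hx hz).trans (mul_le_mul_of_nonneg_left hdist h3.1.le)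
  have hHol : 0 ≤ suspHol R ψ := suspHol_nonneg
  have hSup : 0 ≤ suspSup R ψ := suspSup_nonneg
  calc _ ≤ suspHol R ψ * |x - z| ^ S.α * min (R.r (S.h m x)) (R.r (S.h m z))
        + suspSup R ψ * |R.r (S.h m x) - R.r (S.h m z)| := hsplit
    _ ≤ suspHol R ψ * |x - z| ^ S.α * rhSup R m + suspSup R ψ * (C₃ * |x - z| ^ S.α) := by
        gcongr
    _ = (rhSup R m * suspHol R ψ + C₃ * suspSup R ψ) * |x - z| ^ S.α := by ring

theorem cSup_psiS_comp_h_le (h3 : Cond3 R C₃) (hψ : MemSuspCα R ψ) (hs : s.re ≤ 0) (m : ℕ) :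
    cSup (fun x => psiS R ψ s (S.h m x)) ≤ suspSup R ψ * rhSup R m := by
  refine csSup_le ((nonempty_Icc.2 zero_le_one).image _) ?_
  rintro _ ⟨x, hx, rfl⟩
  exact (norm_psiS_le hψ.2.1 hs (S.h_mem_Icc m hx)).trans
    (mul_le_mul_of_nonneg_left (h3.r_comp_h_le_rhSup m hx) suspSup_nonneg)

theorem cHol_psiS_comp_h_le (h3 : Cond3 R C₃) (hψ : MemSuspCα R ψ) (hs : s.re ≤ 0) (m : ℕ) :
    cHol S.α (fun x => psiS R ψ s (S.h m x)) ≤ rhSup R m * suspHol R ψ + C₃ * suspSup R ψ :=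
  cHol_le_of_forall_Ioo S.αpos
    (add_nonneg (mul_nonneg (h3.rhSup_nonneg m) suspHol_nonneg)
      (mul_nonneg h3.1.le suspSup_nonneg))
    fun _ hx _ hz => norm_psiS_comp_h_sub_le h3 hψ hs m hx hz

end BranchEstimate

theorem psiS_comp_branch_holder_estimate_general
    (S : ExpandingData) (R : RoofData S) (C₃ : ℝ) (h3 : Cond3 R C₃) :
    ∃ C > 0, ∀ ψ : ℝ × ℝ → ℝ, MemSuspCα R ψ →
      ∀ s : ℂ, s.re ≤ 0 → ∀ m : ℕ,
        cNorm S.α (fun x => psiS R ψ s (S.h m x)) ≤ (rhSup R m + C) * suspCα R ψ := by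
  refine ⟨C₃, h3.1, fun ψ hψ s hs m => ?_⟩
  have hsup := cSup_psiS_comp_h_le h3 hψ hs m
  have hhol := cHol_psiS_comp_h_le h3 hψ hs m
  have hC₃ : 0 ≤ C₃ * suspHol R ψ := mul_nonneg h3.1.le suspHol_nonneg
  rw [cNorm, suspCα]
  linear_combination hsup + hhol + hC₃

theorem psiS_comp_branch_holder_estimate
    (S : ExpandingData) (R : RoofData S) (C₁ ρ C₂ : ℝ)
    (h1 : S.Cond1 C₁ ρ) (h2 : S.Cond2 C₂) (C₃ : ℝ) (h3 : Cond3 R C₃) :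
    ∃ C > 0, ∀ ψ : ℝ × ℝ → ℝ, MemSuspCα R ψ →
      ∀ s : ℂ, s.re ≤ 0 → ∀ m : ℕ,
        cNorm S.α (fun x => psiS R ψ s (S.h m x)) ≤ (rhSup R m + C) * suspCα R ψ :=
  psiS_comp_branch_holder_estimate_general S R C₃ h3
end
end
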